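/- arXiv:0811.2870 — 6 statements merged into one kernel-verified Lean document; each statement's English description precedes it below -/
import Mathlib

section
/- A function f : (0,∞) → ℝ is strongly completely monotonic if and only if the function x ↦ x·f(x) is completely monotonic on (0,∞). -/
/-!
With `g x = x * f x`, Leibniz's rule gives `g^(n+1) = x f^(n+1) + (n+1) f^(n)`, so the derivative of
`F_n x = (-1)^n x^(n+1) f^(n)(x)` is `-x^n (-1)^(n+1) g^(n+1)(x)`: on `(0,∞)`, `F_n` is
nonincreasing exactly when `(-1)^(n+1) g^(n+1) ≥ 0`. Nonnegativity of every `F_n` then comes for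
free from `F_0 = g` and `F_(n+1) = (n+1) F_n + x^(n+1) (-1)^(n+1) g^(n+1)`. Smoothness transfers
between `f` and `g` because `f = g / x` on `(0,∞)`.
-/

open Real Set

/-- A function is completely monotonic on `(0,∞)`: it has derivatives of all orders
there and `(-1)^m f^(m)(x) ≥ 0` for all `x > 0` and all `m`. -/
def CompletelyMonotonicOn (f : ℝ → ℝ) : Prop :=
  (∀ m : ℕ, ∀ x : ℝ, 0 < x → DifferentiableAt ℝ (iteratedDeriv m f) x) ∧
  (∀ m : ℕ, ∀ x : ℝ, 0 < x → 0 ≤ (-1 : ℝ) ^ m * iteratedDeriv m f x)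

/-- A function is strongly completely monotonic on `(0,∞)`: it has derivatives of all
orders there and for every `n`, `x ↦ (-1)^n x^(n+1) f^(n)(x)` is nonnegative and
nonincreasing on `(0,∞)`. -/
def StronglyCompletelyMonotonicOn (f : ℝ → ℝ) : Prop :=
  (∀ m : ℕ, ∀ x : ℝ, 0 < x → DifferentiableAt ℝ (iteratedDeriv m f) x) ∧
  (∀ n : ℕ,
    (∀ x : ℝ, 0 < x → 0 ≤ (-1 : ℝ) ^ n * x ^ (n + 1) * iteratedDeriv n f x) ∧
    AntitoneOn (fun x : ℝ => (-1 : ℝ) ^ n * x ^ (n + 1) * iteratedDeriv n f x) (Ioi 0))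

open scoped ContDiff

section NontriviallyNormedField

variable {𝕜 : Type*} [NontriviallyNormedField 𝕜]

theorem contDiffOn_infty_iff_differentiableAt_iteratedDeriv {F : Type*} [NormedAddCommGroup F]
    [NormedSpace 𝕜 F] {f : 𝕜 → F} {s : Set 𝕜} (hs : IsOpen s) :
    ContDiffOn 𝕜 ∞ f s ↔ ∀ m : ℕ, ∀ x ∈ s, DifferentiableAt 𝕜 (iteratedDeriv m f) x := by
  have hwithin : ∀ m : ℕ, DifferentiableOn 𝕜 (iteratedDerivWithin m f s) s ↔
      ∀ x ∈ s, DifferentiableAt 𝕜 (iteratedDeriv m f) x := fun m => by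
    rw [differentiableOn_congr (iteratedDerivWithin_of_isOpen hs)]
    exact ⟨fun h x hx => h.differentiableAt (hs.mem_nhds hx),
      fun h x hx => (h x hx).differentiableWithinAt⟩
  simp only [← hwithin]
  exact ⟨fun hf m => hf.differentiableOn_iteratedDerivWithin
    (by exact_mod_cast WithTop.coe_lt_top m) hs.uniqueDiffOn,
    fun hf => contDiffOn_of_differentiableOn_deriv fun m _ => hf m⟩

theorem contDiffOn_id_mul_iff {n : WithTop ℕ∞} {f : 𝕜 → 𝕜} {s : Set 𝕜} (hs : ∀ x ∈ s, x ≠ 0) :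
    ContDiffOn 𝕜 n (fun x => x * f x) s ↔ ContDiffOn 𝕜 n f s := by
  refine ⟨fun h => ((contDiffOn_id.inv hs).mul h).congr fun x hx => ?_, contDiffOn_id.mul⟩
  simp [inv_mul_cancel_left₀ (hs x hx)]

theorem ContDiffAt.differentiableAt_iteratedDeriv {F : Type*} [NormedAddCommGroup F]
    [NormedSpace 𝕜 F] {n : WithTop ℕ∞} {m : ℕ} {f : 𝕜 → F} {x : 𝕜} (hf : ContDiffAt 𝕜 n f x)
    (hmn : m < n) : DifferentiableAt 𝕜 (iteratedDeriv m f) x := by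
  simpa only [iteratedDeriv_eq_equiv_comp, LinearIsometryEquiv.comp_differentiableAt_iff] using
    hf.differentiableAt_iteratedFDeriv hmn

theorem iteratedDeriv_succ_id_mul {n : ℕ} {f : 𝕜 → 𝕜} {x : 𝕜} (hf : ContDiffAt 𝕜 (n + 1) f x) :
    iteratedDeriv (n + 1) (fun y => y * f y) x
      = x * iteratedDeriv (n + 1) f x + (n + 1) * iteratedDeriv n f x := by
  rw [iteratedDeriv_fun_mul contDiffAt_fun_id hf]
  simp only [iteratedDeriv_fun_id, mul_ite, mul_one, mul_zero, ite_mul, zero_mul,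
    Finset.sum_range_succ', Nat.add_eq_zero_iff, one_ne_zero, and_false, ↓reduceIte,
    Nat.add_eq_right, Nat.reduceSubDiff, Finset.sum_ite_eq', Finset.mem_range,
    Order.lt_add_one_iff, zero_le, zero_add, Nat.choose_one_right, Nat.cast_add, Nat.cast_one,
    tsub_zero, Nat.choose_zero_right, one_mul]
  ring

end NontriviallyNormedField

theorem antitoneOn_iff_hasDerivAt_nonpos {f f' : ℝ → ℝ} {s : Set ℝ} (hs : IsOpen s)
    (hs' : Convex ℝ s) (hf : ∀ x ∈ s, HasDerivAt f (f' x) x) :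
    AntitoneOn f s ↔ ∀ x ∈ s, f' x ≤ 0 := by
  refine ⟨fun h x hx => (hf x hx).hasDerivWithinAt.nonpos_of_antitoneOn (hs.preperfect x hx) h,
    fun h => antitoneOn_of_hasDerivWithinAt_nonpos (f' := f') hs'
      (fun x hx => (hf x hx).continuousAt.continuousWithinAt) ?_ ?_⟩
  all_goals rw [hs.interior_eq]
  · exact fun x hx => (hf x hx).hasDerivWithinAt
  · exact h

noncomputable def scmTerm (f : ℝ → ℝ) (n : ℕ) (x : ℝ) : ℝ :=
  (-1) ^ n * x ^ (n + 1) * iteratedDeriv n f x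

section scmTerm

variable {f : ℝ → ℝ}

theorem hasDerivAt_scmTerm {n : ℕ} {x : ℝ} (hf : ContDiffAt ℝ (n + 1) f x) :
    HasDerivAt (scmTerm f n)
      (-(x ^ n * ((-1) ^ (n + 1) * iteratedDeriv (n + 1) (fun y => y * f y) x))) x := by
  have hdiff : HasDerivAt (iteratedDeriv n f) (iteratedDeriv (n + 1) f x) x := by
    rw [iteratedDeriv_succ]
    exact (hf.differentiableAt_iteratedDeriv (by exact_mod_cast n.lt_succ_self)).hasDerivAt
  refine (((hasDerivAt_pow (n + 1) x).const_mul ((-1 : ℝ) ^ n)).mul hdiff).congr_deriv ?_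
  rw [iteratedDeriv_succ_id_mul hf]
  push_cast
  ring

theorem scmTerm_succ {n : ℕ} {x : ℝ} (hf : ContDiffAt ℝ (n + 1) f x) :
    scmTerm f (n + 1) x = (n + 1) * scmTerm f n x
      + x ^ (n + 1) * ((-1) ^ (n + 1) * iteratedDeriv (n + 1) (fun y => y * f y) x) := by
  rw [scmTerm, scmTerm, iteratedDeriv_succ_id_mul hf]
  ring

theorem antitoneOn_scmTerm_iff (hf : ContDiffOn ℝ ∞ f (Ioi 0)) (n : ℕ) :
    AntitoneOn (scmTerm f n) (Ioi 0) ↔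
      ∀ x, 0 < x → 0 ≤ (-1) ^ (n + 1) * iteratedDeriv (n + 1) (fun y => y * f y) x := by
  rw [antitoneOn_iff_hasDerivAt_nonpos isOpen_Ioi (convex_Ioi 0) fun x hx =>
    hasDerivAt_scmTerm ((hf.contDiffAt (Ioi_mem_nhds hx)).of_le (by exact_mod_cast le_top))]
  refine forall₂_congr fun x hx => ?_
  rw [neg_nonpos, mul_nonneg_iff_of_pos_left (pow_pos hx n)]

theorem scmTerm_nonneg (hf : ContDiffOn ℝ ∞ f (Ioi 0))
    (hg : ∀ m : ℕ, ∀ x : ℝ, 0 < x → 0 ≤ (-1) ^ m * iteratedDeriv m (fun y => y * f y) x)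
    (n : ℕ) {x : ℝ} (hx : 0 < x) : 0 ≤ scmTerm f n x := by
  induction n with
  | zero => simpa [scmTerm] using hg 0 x hx
  | succ n ih =>
    rw [scmTerm_succ ((hf.contDiffAt (Ioi_mem_nhds hx)).of_le (by exact_mod_cast le_top))]
    exact add_nonneg (mul_nonneg (by positivity) ih) (mul_nonneg (by positivity) (hg (n + 1) x hx))

end scmTerm

theorem strongly_completely_monotonic_iff (f : ℝ → ℝ) :
    StronglyCompletelyMonotonicOn f ↔
      CompletelyMonotonicOn (fun x : ℝ => x * f x) := by
  have smooth_iff (g : ℝ → ℝ) :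
      (∀ m : ℕ, ∀ x : ℝ, 0 < x → DifferentiableAt ℝ (iteratedDeriv m g) x) ↔
        ContDiffOn ℝ ∞ g (Ioi 0) := by
    simpa only [mem_Ioi] using (contDiffOn_infty_iff_differentiableAt_iteratedDeriv isOpen_Ioi).symm
  rw [StronglyCompletelyMonotonicOn, CompletelyMonotonicOn, smooth_iff, smooth_iff,
    contDiffOn_id_mul_iff fun x hx => (mem_Ioi.1 hx).ne']
  refine and_congr_right fun hf => ⟨fun hscm m x hx => ?_, fun hcm n => ?_⟩
  · cases m with
    | zero => simpa using (hscm 0).1 x hx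
    | succ n => exact (antitoneOn_scmTerm_iff hf n).1 (hscm n).2 x hx
  · exact ⟨fun x hx => scmTerm_nonneg hf hcm n hx, (antitoneOn_scmTerm_iff hf n).2 (hcm (n + 1))⟩
end

section
/- For every integer n ≥ 0, the function ξ_n(x) = x^n/(1+x) satisfies ξ_n^{(k)}(x) > 0 for every integer k with 0 ≤ k ≤ n and every x > 0. -/
/-!
Since ξ_{n+1} = x ξ_n, the Leibniz rule gives ξ_{n+1}^{(k+1)} = x ξ_n^{(k+1)} + (k+1) ξ_n^{(k)},
so on x > 0 positivity passes from the derivatives of order ≤ n of ξ_n to those of order ≤ n of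
ξ_{n+1}. For the top order, differentiating (1+x) ξ_n = x^n a total of n + 1 times gives
(1+x) ξ_n^{(n+1)} + (n+1) ξ_n^{(n)} = 0, which together with the recursion yields
ξ_n^{(n)} = n!/(1+x)^{n+1}.
-/

open Nat

theorem iteratedDeriv_succ_const_add_mul {𝕜 : Type*} [NontriviallyNormedField 𝕜]
    {f : 𝕜 → 𝕜} {c x : 𝕜} {k : ℕ} (hf : ContDiffAt 𝕜 (k + 1) f x) :
    iteratedDeriv (k + 1) (fun y => (c + y) * f y) x
      = (c + x) * iteratedDeriv (k + 1) f x + (k + 1) * iteratedDeriv k f x := by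
  have hlin (i : ℕ) : iteratedDeriv i (fun y => c + y) x
      = if i = 0 then c + x else if i = 1 then 1 else 0 := by
    rw [← iteratedDeriv_id]
    exact congrFun (iteratedDeriv_comp_const_add i id c) x
  rw [iteratedDeriv_fun_mul (by fun_prop) hf, Finset.sum_range_succ', Finset.sum_range_succ']
  simp only [hlin, Nat.add_eq_zero_iff, one_ne_zero, and_false, and_self, ↓reduceIte,
    Nat.add_eq_right, mul_zero, reduceSubDiff, zero_mul, Finset.sum_const_zero, zero_add,
    choose_one_right, cast_add, cast_one, mul_one, add_tsub_cancel_right, choose_zero_right,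
    one_mul, tsub_zero]
  ring

noncomputable def xi (n : ℕ) (x : ℝ) : ℝ := x ^ n / (1 + x)

theorem contDiffAt_xi (n : ℕ) {x : ℝ} (hx : 1 + x ≠ 0) {m : WithTop ℕ∞} :
    ContDiffAt ℝ m (xi n) x :=
  (contDiffAt_id.pow n).div (contDiffAt_const.add contDiffAt_id) hx

theorem iteratedDeriv_succ_xi_succ (n k : ℕ) {x : ℝ} (hx : 1 + x ≠ 0) :
    iteratedDeriv (k + 1) (xi (n + 1)) x
      = x * iteratedDeriv (k + 1) (xi n) x + (k + 1) * iteratedDeriv k (xi n) x := by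
  have hxi : xi (n + 1) = fun y => (0 + y) * xi n y := by
    funext y
    simp only [xi, zero_add, pow_succ]
    ring
  simpa [hxi] using iteratedDeriv_succ_const_add_mul (c := 0) (contDiffAt_xi n hx)

theorem one_add_mul_iteratedDeriv_succ_xi_add_eq_zero (n : ℕ) {x : ℝ} (hx : 1 + x ≠ 0) :
    (1 + x) * iteratedDeriv (n + 1) (xi n) x + (n + 1) * iteratedDeriv n (xi n) x = 0 := by
  have hpow : (fun y => (1 + y) * xi n y) =ᶠ[nhds x] fun y => y ^ n := by
    filter_upwards [(continuousAt_const.add continuousAt_id).eventually_ne hx]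
      with y (hy : 1 + y ≠ 0)
    simp only [xi]
    field_simp
  rw [← iteratedDeriv_succ_const_add_mul (contDiffAt_xi n hx), hpow.iteratedDeriv_eq]
  simp

theorem iteratedDeriv_xi_self (n : ℕ) {x : ℝ} (hx : 1 + x ≠ 0) :
    iteratedDeriv n (xi n) x = n ! / (1 + x) ^ (n + 1) := by
  induction n with
  | zero => simp [xi]
  | succ n ih =>
    have h := one_add_mul_iteratedDeriv_succ_xi_add_eq_zero n hx
    rw [ih] at h
    rw [iteratedDeriv_succ_xi_succ n n hx, ih, factorial_succ, pow_succ _ (n + 1), ← div_div,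
      eq_div_iff hx]
    push_cast
    linear_combination x * h

theorem xi_iteratedDeriv_pos (n k : ℕ) (hk : k ≤ n) (x : ℝ) (hx : 0 < x) :
    0 < iteratedDeriv k (fun x : ℝ => x ^ n / (1 + x)) x := by
  change 0 < iteratedDeriv k (xi n) x
  have hx' : 1 + x ≠ 0 := by positivity
  induction n generalizing k with
  | zero =>
    obtain rfl : k = 0 := by omega
    simp only [iteratedDeriv_zero, xi]
    positivity
  | succ n ih =>
    rcases k with _ | j
    · simp only [iteratedDeriv_zero, xi]
      positivity
    rcases Nat.lt_or_ge j n with hj | hj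
    · have hj₁ := ih (k := j + 1) (by omega)
      have hj₀ := ih (k := j) (by omega)
      rw [iteratedDeriv_succ_xi_succ n j hx']
      positivity
    · obtain rfl : j = n := by omega
      rw [iteratedDeriv_xi_self _ hx']
      positivity
end

section
/- For all integers n ≥ 0 and j ≥ 0, every integer l with 0 ≤ l ≤ j, and every t > 0, the l-th derivative of the function t ↦ t^{2j} V_n(t) is strictly positive at t. -/
open Real

/-- `V n t = ∑_{k=1}^∞ 2 / ((t² + 4π²k²)(2πk)^(2n))`. -/
noncomputable def V (n : ℕ) (t : ℝ) : ℝ :=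
  ∑' k : ℕ, 2 / ((t ^ 2 + 4 * π ^ 2 * (k + 1 : ℝ) ^ 2) * (2 * π * (k + 1 : ℝ)) ^ (2 * n))

/-!
Write `a = 2π(k + 1)`. The `k`-th summand of `t ^ (2j) V n t` is a positive multiple of
`t ^ (2j) / (t ^ 2 + a ^ 2) = g (t ^ 2)` with `g u = u ^ j / (u + a ^ 2)`, and the derivatives
of `g` of order at most `j` are positive for `u > 0`. Since `(g (t ^ 2))' = t * 2 g' (t ^ 2)`, the
`l`-th derivative of `g (t ^ 2)` is a combination with nonnegative coefficients of
`g (t ^ 2), …, g^(l) (t ^ 2)` in which `g^(l)` occurs, hence positive for `t > 0` and `l ≤ j`.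
Differentiating term by term is legitimate because
`t ^ (2j) / (t ^ 2 + a ^ 2) = a⁻² t ^ (2j) (1 + (t / a) ^ 2)⁻¹` has all derivatives `O(a⁻²)`,
uniformly on compact sets.
-/

open Set Filter Topology Metric
open scoped ContDiff

theorem iteratedDeriv_id_mul {h : ℝ → ℝ} {x : ℝ} (n : ℕ) (hh : ContDiffAt ℝ n h x) :
    iteratedDeriv n (fun y => y * h y) x
      = x * iteratedDeriv n h x + n * iteratedDeriv (n - 1) h x := by
  rw [iteratedDeriv_fun_mul (f := fun y => y) contDiffAt_id hh]
  rcases n with _ | n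
  · simp
  · rw [Finset.sum_range_succ', Finset.sum_range_succ']
    simp [iteratedDeriv_fun_id, add_comm]

section PowDivAdd

variable {b u : ℝ}

theorem contDiffAt_pow_div_add {n : WithTop ℕ∞} (j : ℕ) (hu : u + b ≠ 0) :
    ContDiffAt ℝ n (fun u => u ^ j / (u + b)) u :=
  (contDiffAt_id.pow j).div (contDiffAt_id.add contDiffAt_const) hu

theorem add_mul_iteratedDeriv_pow_succ_div_add (j : ℕ) (hu : u + b ≠ 0) :
    (u + b) * iteratedDeriv (j + 1) (fun u => u ^ (j + 1) / (u + b)) u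
      = b * (j + 1 : ℕ) * iteratedDeriv j (fun u => u ^ j / (u + b)) u := by
  have hg : ContDiffAt ℝ (j + 1 : ℕ) (fun u => u ^ j / (u + b)) u := contDiffAt_pow_div_add j hu
  have hmul : iteratedDeriv (j + 1) (fun u => u ^ (j + 1) / (u + b)) u
      = u * iteratedDeriv (j + 1) (fun u => u ^ j / (u + b)) u
        + (j + 1 : ℕ) * iteratedDeriv j (fun u => u ^ j / (u + b)) u := by
    have hprod := iteratedDeriv_id_mul (j + 1) hg
    rw [Nat.add_sub_cancel] at hprod
    rw [← hprod]
    congr 1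
    ext v
    ring
  have hsub : iteratedDeriv (j + 1) (fun u => u ^ (j + 1) / (u + b)) u
      = -(b * iteratedDeriv (j + 1) (fun u => u ^ j / (u + b)) u) := by
    have hev : (fun u : ℝ => u ^ (j + 1) / (u + b)) =ᶠ[𝓝 u]
        fun u => u ^ j - b * (u ^ j / (u + b)) := by
      filter_upwards [(continuous_add_const b).continuousAt.eventually_ne hu] with v hv
      field_simp
      ring
    rw [hev.iteratedDeriv_eq, iteratedDeriv_fun_sub (f := fun u => u ^ j)
      (g := fun u => b * (u ^ j / (u + b))) (contDiffAt_id.pow j) (contDiffAt_const.mul hg),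
      iteratedDeriv_const_mul_field, iteratedDeriv_pow, Nat.descFactorial_of_lt (by omega)]
    simp
  linear_combination b * hmul + u * hsub

theorem iteratedDeriv_pow_div_add_pos (hb : 0 < b) {j i : ℕ} (hij : i ≤ j) (hu : 0 < u) :
    0 < iteratedDeriv i (fun u => u ^ j / (u + b)) u := by
  induction j generalizing i with
  | zero =>
    obtain rfl : i = 0 := by omega
    simp only [iteratedDeriv_zero, pow_zero]
    positivity
  | succ j ih =>
    rcases Nat.lt_or_ge i (j + 1) with hi | hi
    · have hmul : (fun u : ℝ => u ^ (j + 1) / (u + b)) = fun u => u * (u ^ j / (u + b)) := by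
        ext v
        ring
      rw [hmul, iteratedDeriv_id_mul i (contDiffAt_pow_div_add j (by positivity))]
      have hcur := ih (i := i) (by omega)
      rcases Nat.eq_zero_or_pos i with rfl | hi0
      · simpa using mul_pos hu hcur
      · have hprev := ih (i := i - 1) (by omega)
        positivity
    · obtain rfl : i = j + 1 := by omega
      have hj := ih (i := j) le_rfl
      refine pos_of_mul_pos_right (a := u + b) ?_ (by positivity)
      rw [add_mul_iteratedDeriv_pow_succ_div_add j (by positivity)]
      positivity

end PowDivAdd

theorem iteratedDeriv_comp_sq_pos {g : ℝ → ℝ} (hg : ContDiffOn ℝ ∞ g (Ioi 0)) {l : ℕ}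
    (hpos : ∀ i ≤ l, ∀ u > 0, 0 < iteratedDeriv i g u) {t : ℝ} (ht : 0 < t) :
    0 < iteratedDeriv l (fun s => g (s ^ 2)) t := by
  induction l using Nat.strong_induction_on generalizing g t with
  | _ l ih =>
  rcases l with _ | l
  · simpa using hpos 0 le_rfl _ (by positivity)
  set g' := fun u => 2 * deriv g u
  have hg' : ContDiffOn ℝ ∞ g' (Ioi 0) :=
    contDiffOn_const.mul (hg.deriv_of_isOpen isOpen_Ioi le_rfl)
  have hg'pos : ∀ i ≤ l, ∀ u > 0, 0 < iteratedDeriv i g' u := fun i hi u hu => by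
    rw [iteratedDeriv_const_mul_field, ← iteratedDeriv_succ']
    have := hpos (i + 1) (by omega) u hu
    positivity
  have hderiv : deriv (fun s => g (s ^ 2)) =ᶠ[𝓝 t] fun s => s * g' (s ^ 2) := by
    filter_upwards [Ioi_mem_nhds ht] with s hs
    have hgs : DifferentiableAt ℝ g (s ^ 2) :=
      (hg.contDiffAt (Ioi_mem_nhds (by simp only [mem_Ioi] at hs; positivity))).differentiableAt
        (by simp)
    have hsq : HasDerivAt (fun s : ℝ => s ^ 2) (2 * s) s := by simpa using hasDerivAt_pow 2 s
    exact (hgs.hasDerivAt.comp (h := fun s => s ^ 2) s hsq).deriv.trans (by ring)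
  have hsmooth : ContDiffAt ℝ l (fun s => g' (s ^ 2)) t :=
    ((hg'.contDiffAt (Ioi_mem_nhds (by positivity))).comp t (contDiffAt_id.pow 2)).of_le
      ENat.LEInfty.out
  rw [iteratedDeriv_succ', hderiv.iteratedDeriv_eq, iteratedDeriv_id_mul l hsmooth]
  have hcur := ih l (by omega) hg' hg'pos ht
  rcases Nat.eq_zero_or_pos l with rfl | hl0
  · simpa using mul_pos ht hcur
  · have hprev := ih (l - 1) (by omega) hg' (fun i hi => hg'pos i (by omega)) ht
    positivity

theorem iteratedDeriv_pow_div_sq_add_pos {b : ℝ} (hb : 0 < b) {j l : ℕ} (hl : l ≤ j) {t : ℝ}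
    (ht : 0 < t) : 0 < iteratedDeriv l (fun t => t ^ (2 * j) / (t ^ 2 + b)) t := by
  have hcomp : (fun t : ℝ => t ^ (2 * j) / (t ^ 2 + b))
      = fun t => (fun u => u ^ j / (u + b)) (t ^ 2) := by
    ext t
    rw [pow_mul]
  rw [hcomp]
  have hg : ContDiffOn ℝ ∞ (fun u => u ^ j / (u + b)) (Ioi 0) := fun u hu =>
    (contDiffAt_pow_div_add j (by simp only [mem_Ioi] at hu; positivity)).contDiffWithinAt
  exact iteratedDeriv_comp_sq_pos hg
    (fun i hi u hu => iteratedDeriv_pow_div_add_pos hb (hi.trans hl) hu) ht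

theorem exists_bound_iteratedDeriv_mul_comp_inv_mul {φ ψ : ℝ → ℝ} (hφ : ContDiff ℝ ∞ φ)
    (hψ : ContDiff ℝ ∞ ψ) (m : ℕ) (R : ℝ) :
    ∃ C, ∀ a : ℝ, 1 ≤ a → ∀ x ∈ closedBall (0 : ℝ) R,
      |iteratedDeriv m (fun x => φ x * ψ (a⁻¹ * x)) x| ≤ C := by
  have exists_bound {f : ℝ → ℝ} (hf : ContDiff ℝ ∞ f) (i : ℕ) :
      ∃ P, ∀ x ∈ closedBall (0 : ℝ) R, ‖iteratedDeriv i f x‖ ≤ P :=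
    (isCompact_closedBall 0 R).exists_bound_of_continuousOn
      (hf.continuous_iteratedDeriv i ENat.LEInfty.out).continuousOn
  choose P hP using exists_bound hφ
  choose M hM using exists_bound hψ
  refine ⟨∑ i ∈ Finset.range (m + 1), m.choose i * (P i * M (m - i)), fun a ha x hx => ?_⟩
  have hax : a⁻¹ * x ∈ closedBall 0 R := by
    rw [mem_closedBall_zero_iff] at hx ⊢
    rw [norm_mul, norm_inv, Real.norm_of_nonneg (by linarith)]
    exact (mul_le_of_le_one_left (norm_nonneg x) (inv_le_one_of_one_le₀ ha)).trans hx
  have hψa : ContDiff ℝ ∞ fun x => ψ (a⁻¹ * x) := hψ.comp (by fun_prop)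
  rw [iteratedDeriv_fun_mul (f := φ) (g := fun x => ψ (a⁻¹ * x))
    (hφ.contDiffAt.of_le ENat.LEInfty.out) (hψa.contDiffAt.of_le ENat.LEInfty.out)]
  refine (Finset.abs_sum_le_sum_abs _ _).trans (Finset.sum_le_sum fun i _ => ?_)
  rw [iteratedDeriv_comp_const_mul (hψ.of_le ENat.LEInfty.out), abs_mul, abs_mul, abs_mul,
    Nat.abs_cast]
  have hφi : |iteratedDeriv i φ x| ≤ P i := hP i x hx
  have hψi : |a⁻¹ ^ (m - i)| * |iteratedDeriv (m - i) ψ (a⁻¹ * x)| ≤ M (m - i) := by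
    have hpow : |a⁻¹ ^ (m - i)| ≤ 1 := by
      rw [abs_of_nonneg (by positivity)]
      exact pow_le_one₀ (by positivity) (inv_le_one_of_one_le₀ ha)
    exact (mul_le_mul hpow (hM _ _ hax) (abs_nonneg _) zero_le_one).trans_eq (one_mul _)
  rw [mul_assoc]
  exact mul_le_mul_of_nonneg_left
    (mul_le_mul hφi hψi (by positivity) ((abs_nonneg _).trans hφi)) (by positivity)

theorem exists_bound_iteratedDeriv_pow_div_sq_add_sq (j m : ℕ) (R : ℝ) :
    ∃ C, ∀ a : ℝ, 1 ≤ a → ∀ x ∈ closedBall (0 : ℝ) R,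
      |iteratedDeriv m (fun x => x ^ j / (x ^ 2 + a ^ 2)) x| ≤ C / a ^ 2 := by
  have hψ : ContDiff ℝ ∞ fun y : ℝ => (y ^ 2 + 1)⁻¹ :=
    (contDiff_id.pow 2 |>.add contDiff_const).inv fun y => by positivity
  obtain ⟨C, hC⟩ :=
    exists_bound_iteratedDeriv_mul_comp_inv_mul (φ := fun x => x ^ j) (by fun_prop) hψ m R
  refine ⟨C, fun a ha x hx => ?_⟩
  have hscale : (fun x : ℝ => x ^ j / (x ^ 2 + a ^ 2))
      = fun x => (a ^ 2)⁻¹ * (x ^ j * ((a⁻¹ * x) ^ 2 + 1)⁻¹) := by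
    ext x
    have : x ^ 2 + a ^ 2 ≠ 0 := by positivity
    field_simp
  rw [hscale, iteratedDeriv_const_mul_field, abs_mul, abs_inv, abs_of_pos (by positivity),
    inv_mul_eq_div]
  gcongr
  exact hC a ha x hx

theorem iteratedDeriv_tsum_of_bound {f : ℕ → ℝ → ℝ} {u : ℕ → ℝ} {s : Set ℝ} (hs : IsOpen s)
    (hf : ∀ k, ContDiff ℝ ∞ (f k)) (hu : Summable u)
    (hbound : ∀ m, ∃ C, ∀ k, ∀ x ∈ s, |iteratedDeriv m (f k) x| ≤ C * u k)
    (m : ℕ) {x : ℝ} (hx : x ∈ s) :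
    iteratedDeriv m (fun y => ∑' k, f k y) x = ∑' k, iteratedDeriv m (f k) x := by
  have hwithin {g : ℝ → ℝ} {i : ℕ} {y : ℝ} (hy : y ∈ s) :
      iteratedDerivWithin i g s y = iteratedDeriv i g y := iteratedDerivWithin_of_isOpen hs hy
  rw [← hwithin hx, iteratedDerivWithin_tsum m hs hx]
  · exact tsum_congr fun k => hwithin hx
  · intro y hy
    obtain ⟨C, hC⟩ := hbound 0
    exact .of_norm_bounded (hu.mul_left C) fun k => by simpa using hC k y hy
  · intro i _ _
    obtain ⟨C, hC⟩ := hbound i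
    refine SummableLocallyUniformlyOn_of_locally_bounded hs fun K hK _ => ⟨_, hu.mul_left C, ?_⟩
    intro k y hy
    rw [hwithin (hK hy)]
    exact hC k y (hK hy)
  · intro k i y _ hy
    refine (((hf k).differentiable_iteratedDeriv i
      (by exact_mod_cast WithTop.coe_lt_top _)) y).congr_of_eventuallyEq ?_
    filter_upwards [hs.mem_nhds hy] with z hz using hwithin hz

theorem iteratedDeriv_tsum_mul_pow_div_sq_add_sq_pos {c a : ℕ → ℝ} (hc : ∀ k, 0 < c k)
    (ha : ∀ k, 1 ≤ a k) (hsum : Summable fun k => c k / a k ^ 2) {j l : ℕ} (hl : l ≤ j) {t : ℝ}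
    (ht : 0 < t) :
    0 < iteratedDeriv l (fun t => ∑' k, c k * (t ^ (2 * j) / (t ^ 2 + a k ^ 2))) t := by
  set f : ℕ → ℝ → ℝ := fun k t => c k * (t ^ (2 * j) / (t ^ 2 + a k ^ 2))
  have hf (k : ℕ) : ContDiff ℝ ∞ (f k) :=
    contDiff_const.mul ((contDiff_id.pow _).div (contDiff_id.pow 2 |>.add contDiff_const)
      fun x => by have := ha k; positivity)
  have hbound (m : ℕ) : ∃ C, ∀ k, ∀ x ∈ ball (0 : ℝ) (t + 1),
      |iteratedDeriv m (f k) x| ≤ C * (c k / a k ^ 2) := by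
    obtain ⟨C, hC⟩ := exists_bound_iteratedDeriv_pow_div_sq_add_sq (2 * j) m (t + 1)
    refine ⟨C, fun k x hx => ?_⟩
    rw [iteratedDeriv_const_mul_field, abs_mul, abs_of_pos (hc k)]
    calc c k * |iteratedDeriv m (fun t => t ^ (2 * j) / (t ^ 2 + a k ^ 2)) x|
        ≤ c k * (C / a k ^ 2) :=
          mul_le_mul_of_nonneg_left (hC _ (ha k) x (ball_subset_closedBall hx)) (hc k).le
      _ = C * (c k / a k ^ 2) := by ring
  have hpos (k : ℕ) : 0 < iteratedDeriv l (f k) t := by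
    rw [iteratedDeriv_const_mul_field]
    exact mul_pos (hc k) (iteratedDeriv_pow_div_sq_add_pos (by have := ha k; positivity) hl ht)
  have ht' : t ∈ ball (0 : ℝ) (t + 1) := by simp [abs_of_pos ht]
  rw [iteratedDeriv_tsum_of_bound isOpen_ball hf hsum hbound l ht']
  obtain ⟨C, hC⟩ := hbound l
  exact (Summable.of_norm_bounded (hsum.mul_left C) fun k => hC k t ht').tsum_pos
    (fun k => (hpos k).le) 0 (hpos 0)

theorem pow_mul_V_eq_tsum (n j : ℕ) (t : ℝ) :
    t ^ (2 * j) * V n t = ∑' k : ℕ, 2 / (2 * π * (k + 1 : ℝ)) ^ (2 * n) *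
      (t ^ (2 * j) / (t ^ 2 + (2 * π * (k + 1 : ℝ)) ^ 2)) := by
  rw [V, ← tsum_mul_left]
  congr 1
  ext k
  have : 0 < t ^ 2 + 4 * π ^ 2 * (k + 1 : ℝ) ^ 2 := by positivity
  field_simp
  ring

theorem one_le_two_pi_mul_succ (k : ℕ) : 1 ≤ 2 * π * (k + 1 : ℝ) := by
  nlinarith [pi_gt_three, (k.cast_nonneg : (0 : ℝ) ≤ k)]

theorem summable_two_div_two_pi_mul_succ_pow (n : ℕ) :
    Summable fun k : ℕ => 2 / (2 * π * (k + 1 : ℝ)) ^ (2 * n) / (2 * π * (k + 1 : ℝ)) ^ 2 := by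
  have h := (summable_nat_add_iff 1).mpr
    (Real.summable_one_div_nat_pow.mpr (by omega : 1 < 2 * n + 2))
  refine (h.mul_left (2 / (2 * π) ^ (2 * n + 2))).congr fun k => ?_
  rw [div_div, ← pow_add, mul_pow]
  push_cast
  field_simp
  rw [mul_pow, mul_pow]
  ring

theorem iteratedDeriv_pow_mul_V_pos (n j l : ℕ) (hl : l ≤ j) (t : ℝ) (ht : 0 < t) :
    0 < iteratedDeriv l (fun t : ℝ => t ^ (2 * j) * V n t) t := by
  simp_rw [pow_mul_V_eq_tsum]
  exact iteratedDeriv_tsum_mul_pow_div_sq_add_sq_pos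
    (fun k => by have := one_le_two_pi_mul_succ k; positivity) one_le_two_pi_mul_succ
    (summable_two_div_two_pi_mul_succ_pow n) hl ht
end

section
/- For every integer n ≥ 0 and every t > 0, V_n''(t) − V_n''(0) > 0, where V_n'' denotes the second derivative of V_n. -/
open Real

/-!
Each summand of `V n` is `c / (t ^ 2 + a)` with `c = 2 / (2πk) ^ (2n) > 0` and `a = (2πk)² ≥ 1`.
Its second derivative `c (6t² - 2a) / (t² + a)³` exceeds its value `-2c / a²` at `0` by
`2ct² (t⁴ + 3at² + 6a²) / (a² (t² + a)³)`, which is positive for `t ≠ 0`. The first two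
derivatives are bounded uniformly in `t` by `c / a` and `6c / a`, and `∑ c / a` converges, so the
series may be differentiated termwise twice and the termwise inequality passes to the sum.
-/

theorem iteratedDeriv_two_tsum {ι 𝕜 F : Type*} [NontriviallyNormedField 𝕜] [IsRCLikeNormedField 𝕜]
    [NormedAddCommGroup F] [NormedSpace 𝕜 F] [CompleteSpace F]
    {g g' g'' : ι → 𝕜 → F} {u' u'' : ι → ℝ} (hu' : Summable u') (hu'' : Summable u'')
    (hg : ∀ i y, HasDerivAt (g i) (g' i y) y) (hg' : ∀ i y, HasDerivAt (g' i) (g'' i y) y)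
    (hg'_le : ∀ i y, ‖g' i y‖ ≤ u' i) (hg''_le : ∀ i y, ‖g'' i y‖ ≤ u'' i) {y₀ y₁ : 𝕜}
    (hg_y₀ : Summable fun i => g i y₀) (hg'_y₁ : Summable fun i => g' i y₁) (y : 𝕜) :
    iteratedDeriv 2 (fun z => ∑' i, g i z) y = ∑' i, g'' i y := by
  have hderiv : deriv (fun z => ∑' i, g i z) = fun z => ∑' i, g' i z :=
    funext fun z => (hasDerivAt_tsum hu' hg hg'_le hg_y₀ z).deriv
  rw [iteratedDeriv_succ, iteratedDeriv_one, hderiv]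
  exact (hasDerivAt_tsum hu'' hg' hg''_le hg'_y₁ y).deriv

section InverseQuadratic

variable {a : ℝ} (c : ℝ)

theorem hasDerivAt_div_sq_add (ha : 0 < a) (t : ℝ) :
    HasDerivAt (fun s => c / (s ^ 2 + a)) (-2 * c * t / (t ^ 2 + a) ^ 2) t := by
  have hpos : 0 < t ^ 2 + a := by positivity
  refine ((hasDerivAt_const t c).div ((hasDerivAt_pow 2 t).add_const a) hpos.ne').congr_deriv ?_
  field_simp
  ring

theorem hasDerivAt_mul_div_sq_add_sq (ha : 0 < a) (t : ℝ) :
    HasDerivAt (fun s => -2 * c * s / (s ^ 2 + a) ^ 2)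
      (c * (6 * t ^ 2 - 2 * a) / (t ^ 2 + a) ^ 3) t := by
  have hpos : 0 < t ^ 2 + a := by positivity
  refine (((hasDerivAt_id' t).const_mul (-2 * c)).div
    (((hasDerivAt_pow 2 t).add_const a).pow 2) (pow_ne_zero 2 hpos.ne')).congr_deriv ?_
  simp only [Pi.pow_apply]
  field_simp
  ring

variable {c}

theorem abs_mul_div_sq_add_sq_le (hc : 0 ≤ c) (ha : 1 ≤ a) (t : ℝ) :
    |-2 * c * t / (t ^ 2 + a) ^ 2| ≤ c / a := by
  -- `2 |t| ≤ t² + 1 ≤ t² + a`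
  have h2t : 2 * |t| ≤ t ^ 2 + a := by nlinarith [sq_nonneg (|t| - 1), sq_abs t]
  rw [abs_div, abs_of_pos (by positivity : (0 : ℝ) < (t ^ 2 + a) ^ 2), abs_mul,
    abs_of_nonpos (by linarith : -2 * c ≤ 0), div_le_div_iff₀ (by positivity) (by positivity)]
  calc -(-2 * c) * |t| * a = c * (2 * |t|) * a := by ring
    _ ≤ c * (t ^ 2 + a) * (t ^ 2 + a) := by gcongr; nlinarith [sq_nonneg t]
    _ = c * (t ^ 2 + a) ^ 2 := by ring

theorem abs_mul_div_sq_add_cube_le (hc : 0 ≤ c) (ha : 1 ≤ a) (t : ℝ) :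
    |c * (6 * t ^ 2 - 2 * a) / (t ^ 2 + a) ^ 3| ≤ 6 * (c / a) := by
  have hnum : |6 * t ^ 2 - 2 * a| ≤ 6 * (t ^ 2 + a) := by
    rw [abs_le]; constructor <;> nlinarith [sq_nonneg t]
  rw [abs_div, abs_of_pos (by positivity : (0 : ℝ) < (t ^ 2 + a) ^ 3), abs_mul, abs_of_nonneg hc,
    div_le_iff₀ (by positivity)]
  calc c * |6 * t ^ 2 - 2 * a| ≤ c * (6 * (t ^ 2 + a)) := by gcongr
    _ = 6 * (c / a) * (t ^ 2 + a) * a := by field_simp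
    _ ≤ 6 * (c / a) * (t ^ 2 + a) * (t ^ 2 + a) ^ 2 := by gcongr; nlinarith [sq_nonneg t]
    _ = 6 * (c / a) * (t ^ 2 + a) ^ 3 := by ring

theorem mul_div_sq_add_cube_sub_at_zero (ha : 0 < a) (t : ℝ) :
    c * (6 * t ^ 2 - 2 * a) / (t ^ 2 + a) ^ 3 - c * (6 * 0 ^ 2 - 2 * a) / (0 ^ 2 + a) ^ 3 =
      2 * c * t ^ 2 * (t ^ 4 + 3 * a * t ^ 2 + 6 * a ^ 2) / (a ^ 2 * (t ^ 2 + a) ^ 3) := by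
  field_simp
  ring

end InverseQuadratic

section InverseQuadraticSeries

variable {ι : Type*} {c a : ι → ℝ}

theorem iteratedDeriv_two_tsum_div_sq_add (hc : ∀ i, 0 ≤ c i) (ha : ∀ i, 1 ≤ a i)
    (hs : Summable fun i => c i / a i) (t : ℝ) :
    iteratedDeriv 2 (fun s => ∑' i, c i / (s ^ 2 + a i)) t =
      ∑' i, c i * (6 * t ^ 2 - 2 * a i) / (t ^ 2 + a i) ^ 3 := by
  have ha₀ i : 0 < a i := one_pos.trans_le (ha i)
  refine iteratedDeriv_two_tsum hs (hs.mul_left 6)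
    (fun i => hasDerivAt_div_sq_add (c i) (ha₀ i))
    (fun i => hasDerivAt_mul_div_sq_add_sq (c i) (ha₀ i))
    (fun i y => abs_mul_div_sq_add_sq_le (hc i) (ha i) y)
    (fun i y => abs_mul_div_sq_add_cube_le (hc i) (ha i) y) (y₀ := 0) (y₁ := 0) ?_ ?_ t
  · simpa using hs
  · simp

theorem iteratedDeriv_two_tsum_div_sq_add_lt (hc : ∀ i, 0 ≤ c i) (ha : ∀ i, 1 ≤ a i)
    (hs : Summable fun i => c i / a i) {i₀ : ι} (hi₀ : 0 < c i₀) {t : ℝ} (ht : t ≠ 0) :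
    iteratedDeriv 2 (fun s => ∑' i, c i / (s ^ 2 + a i)) 0 <
      iteratedDeriv 2 (fun s => ∑' i, c i / (s ^ 2 + a i)) t := by
  have ha₀ i : 0 < a i := one_pos.trans_le (ha i)
  have hsum (s : ℝ) : Summable fun i => c i * (6 * s ^ 2 - 2 * a i) / (s ^ 2 + a i) ^ 3 :=
    (hs.mul_left 6).of_norm_bounded fun i => abs_mul_div_sq_add_cube_le (hc i) (ha i) s
  rw [iteratedDeriv_two_tsum_div_sq_add hc ha hs, iteratedDeriv_two_tsum_div_sq_add hc ha hs]
  refine Summable.tsum_lt_tsum (i := i₀) (fun i => ?_) ?_ (hsum 0) (hsum t)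
  · rw [← sub_nonneg, mul_div_sq_add_cube_sub_at_zero (ha₀ i)]
    have := hc i
    have := ha₀ i
    positivity
  · rw [← sub_pos, mul_div_sq_add_cube_sub_at_zero (ha₀ i₀)]
    have := ha₀ i₀
    positivity

end InverseQuadraticSeries

theorem summable_mul_succ_pow_inv (b : ℝ) {p : ℕ} (hp : 1 < p) :
    Summable fun k : ℕ => ((b * (k + 1)) ^ p)⁻¹ := by
  have h := ((summable_nat_add_iff 1).2 (Real.summable_nat_pow_inv.2 hp)).mul_left (b ^ p)⁻¹
  refine h.congr fun k => ?_
  push_cast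
  rw [← mul_inv, ← mul_pow]

theorem V_eq_tsum (n : ℕ) :
    V n = fun t => ∑' k : ℕ,
      2 / (2 * π * (k + 1)) ^ (2 * n) / (t ^ 2 + (2 * π * (k + 1)) ^ 2) := by
  funext t
  refine tsum_congr fun k => ?_
  rw [div_div, mul_comm, mul_pow, mul_pow]
  ring

theorem summable_V_coeff_div (n : ℕ) :
    Summable fun k : ℕ => 2 / (2 * π * (k + 1)) ^ (2 * n) / (2 * π * (k + 1)) ^ 2 := by
  refine ((summable_mul_succ_pow_inv (2 * π) (p := 2 * n + 2) (by omega)).mul_left 2).congr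
    fun k => ?_
  rw [pow_add, div_div, div_eq_mul_inv]

theorem one_le_sq_two_pi_mul_succ (k : ℕ) : 1 ≤ (2 * π * (k + 1)) ^ 2 :=
  one_le_pow₀ (by nlinarith [pi_gt_three, (k.cast_nonneg : (0 : ℝ) ≤ k)])

theorem V_second_deriv_gt (n : ℕ) (t : ℝ) (ht : 0 < t) :
    0 < iteratedDeriv 2 (V n) t - iteratedDeriv 2 (V n) 0 := by
  rw [sub_pos, V_eq_tsum]
  exact iteratedDeriv_two_tsum_div_sq_add_lt (fun k => by positivity) one_le_sq_two_pi_mul_succ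
    (summable_V_coeff_div n) (i₀ := 0) (by positivity) ht.ne'
end

section
/- For every integer n ≥ 0 and every t > 0, t/(e^t − 1) = 1 − t/2 + Σ_{k=1}^n (B_{2k}/(2k)!) t^{2k} + (−1)^n t^{2n+2} V_n(t), where B_{2k} are the Bernoulli numbers. -/
open Real

/-!
Substituting `z = i t / (2π)` in the Mittag-Leffler expansion
`π cot (π z) = 1 / z + ∑_{k ≥ 1} (1 / (z - k) + 1 / (z + k))` gives
`1 / (eᵗ - 1) = 1 / t - 1 / 2 + ∑_{k ≥ 1} 2t / (t² + 4π²k²)`, which is the case `n = 0`.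
The induction step rests on the partial fraction
`1 / (t² + 4π²k²) = 1 / (2πk)² - t² / ((t² + 4π²k²) (2πk)²)`
and on Euler's evaluation of `ζ(2n + 2)` through `B_{2n+2}`.
-/

namespace Complex

lemma ofReal_mul_I_mem_integerComplement {y : ℝ} (hy : y ≠ 0) :
    (y : ℂ) * I ∈ integerComplement := by
  rintro ⟨n, hn⟩
  exact hy (by simpa using (congrArg im hn).symm)

lemma hasSum_cotTerm {x : ℂ} (hx : x ∈ integerComplement) :
    HasSum (cotTerm x) (π * cot (π * x) - 1 / x) :=
  (summable_cotTerm hx).hasSum_iff.mpr (cot_series_rep' hx).symm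

lemma cotTerm_ofReal_div_two_pi_mul_I (t : ℝ) (k : ℕ) :
    cotTerm ((t / (2 * π) : ℝ) * I) k =
      -2 * π * I * ((2 * t / (t ^ 2 + 4 * π ^ 2 * (k + 1) ^ 2) : ℝ) : ℂ) := by
  have hk : 2 * π * ((k : ℝ) + 1) ≠ 0 := by positivity
  have hadd : (t : ℂ) * I + 2 * π * (k + 1) ≠ 0 := fun h ↦ hk (by simpa using congrArg re h)
  have hsub : (t : ℂ) * I - 2 * π * (k + 1) ≠ 0 := fun h ↦ hk (by simpa using congrArg re h)
  have hD : (t : ℂ) ^ 2 + 4 * π ^ 2 * (k + 1) ^ 2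
      = -(((t : ℂ) * I - 2 * π * (k + 1)) * ((t : ℂ) * I + 2 * π * (k + 1))) := by
    linear_combination (t : ℂ) ^ 2 * I_sq
  simp only [cotTerm]
  push_cast
  rw [hD]
  field_simp
  ring

lemma pi_mul_cot_sub_one_div_ofReal_div_two_pi_mul_I {t : ℝ} (ht : t ≠ 0) :
    π * cot (π * ((t / (2 * π) : ℝ) * I)) - 1 / ((t / (2 * π) : ℝ) * I) =
      -2 * π * I * ((1 / (Real.exp t - 1) - 1 / t + 1 / 2 : ℝ) : ℂ) := by
  have htC : (t : ℂ) ≠ 0 := ofReal_ne_zero.mpr ht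
  have hE : Complex.exp t - 1 ≠ 0 := by
    rw [← ofReal_exp]
    exact_mod_cast sub_ne_zero.mpr ((Real.exp_eq_one_iff t).not.mpr ht)
  have hexp : Complex.exp (2 * π * I * ((t / (2 * π) : ℝ) * I)) = (Complex.exp t)⁻¹ := by
    rw [← Complex.exp_neg]
    congr 1
    push_cast
    field_simp
    exact I_sq
  rw [cot_pi_eq_exp_ratio, hexp]
  push_cast
  field_simp
  linear_combination (2 * (t - (Complex.exp t - 1)) + (Complex.exp t - 1) * t) * I_sq

end Complex

open Complex in
lemma hasSum_inv_exp_sub_one {t : ℝ} (ht : t ≠ 0) :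
    HasSum (fun k : ℕ => 2 * t / (t ^ 2 + 4 * π ^ 2 * (k + 1) ^ 2))
      (1 / (Real.exp t - 1) - 1 / t + 1 / 2) := by
  have h := hasSum_cotTerm (ofReal_mul_I_mem_integerComplement (y := t / (2 * π)) (by positivity))
  rw [funext (cotTerm_ofReal_div_two_pi_mul_I t),
    pi_mul_cot_sub_one_div_ofReal_div_two_pi_mul_I ht,
    hasSum_mul_left_iff (by simp [pi_ne_zero, I_ne_zero])] at h
  exact_mod_cast h

lemma hasSum_two_div_two_pi_mul_pow (n : ℕ) :
    HasSum (fun k : ℕ => 2 / (2 * π * (k + 1)) ^ (2 * (n + 1)))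
      ((-1) ^ n * bernoulli (2 * (n + 1)) / (2 * (n + 1)).factorial) := by
  have h := (hasSum_nat_add_iff' 1).mpr (hasSum_zeta_nat n.succ_ne_zero)
  simp only [Finset.sum_range_one, Nat.cast_zero, Nat.cast_add, Nat.cast_one,
    zero_pow (by omega : 2 * n.succ ≠ 0), div_zero, sub_zero, Nat.succ_eq_add_one,
    show 2 * (n + 1) - 1 = 2 * n + 1 by omega] at h
  have hval : 2 / (2 * π) ^ (2 * (n + 1)) * ((-1) ^ (n + 1 + 1) * 2 ^ (2 * n + 1) *
      π ^ (2 * (n + 1)) * bernoulli (2 * (n + 1)) / (2 * (n + 1)).factorial) =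
      (-1) ^ n * bernoulli (2 * (n + 1)) / (2 * (n + 1)).factorial := by
    field_simp
    ring
  refine hval ▸ (h.mul_left _).congr_fun fun k ↦ ?_
  rw [mul_pow]
  field_simp

noncomputable def vTerm (n : ℕ) (t : ℝ) (k : ℕ) : ℝ :=
  2 / ((t ^ 2 + 4 * π ^ 2 * (k + 1 : ℝ) ^ 2) * (2 * π * (k + 1 : ℝ)) ^ (2 * n))

lemma vTerm_zero (t : ℝ) (k : ℕ) : vTerm 0 t k = 2 / (t ^ 2 + 4 * π ^ 2 * (k + 1) ^ 2) := by
  simp [vTerm]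

lemma vTerm_eq_sub (n : ℕ) (t : ℝ) (k : ℕ) :
    vTerm n t k = 2 / (2 * π * (k + 1)) ^ (2 * (n + 1)) - t ^ 2 * vTerm (n + 1) t k := by
  simp only [vTerm, Nat.mul_succ, pow_add]
  field_simp
  ring

noncomputable def bernoulliSeriesRemainder (n : ℕ) (t : ℝ) : ℝ :=
  t / (Real.exp t - 1) -
    (1 - t / 2 +
      ∑ k ∈ Finset.Icc 1 n, (bernoulli (2 * k) : ℝ) / (2 * k).factorial * t ^ (2 * k))

lemma bernoulliSeriesRemainder_succ (n : ℕ) (t : ℝ) :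
    bernoulliSeriesRemainder (n + 1) t = bernoulliSeriesRemainder n t -
      bernoulli (2 * (n + 1)) / (2 * (n + 1)).factorial * t ^ (2 * (n + 1)) := by
  rw [bernoulliSeriesRemainder, bernoulliSeriesRemainder, Finset.sum_Icc_succ_top (by omega)]
  ring

lemma hasSum_vTerm {t : ℝ} (ht : t ≠ 0) (n : ℕ) :
    HasSum (vTerm n t) ((-1) ^ n * bernoulliSeriesRemainder n t / t ^ (2 * n + 2)) := by
  induction n with
  | zero =>
    have hE : Real.exp t - 1 ≠ 0 := sub_ne_zero.mpr ((Real.exp_eq_one_iff t).not.mpr ht)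
    have hval : (1 / (Real.exp t - 1) - 1 / t + 1 / 2) / t =
        (-1) ^ 0 * bernoulliSeriesRemainder 0 t / t ^ (2 * 0 + 2) := by
      simp only [bernoulliSeriesRemainder, Finset.Icc_eq_empty_of_lt zero_lt_one,
        Finset.sum_empty]
      field_simp
      ring
    refine hval ▸ ((hasSum_inv_exp_sub_one ht).div_const t).congr_fun fun k ↦ ?_
    rw [vTerm_zero]
    field_simp
  | succ n ih =>
    have hval : ((-1) ^ n * bernoulli (2 * (n + 1)) / (2 * (n + 1)).factorial -
          (-1) ^ n * bernoulliSeriesRemainder n t / t ^ (2 * n + 2)) / t ^ 2 =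
        (-1) ^ (n + 1) * bernoulliSeriesRemainder (n + 1) t / t ^ (2 * (n + 1) + 2) := by
      rw [bernoulliSeriesRemainder_succ]
      field_simp
      ring
    refine hval ▸ (((hasSum_two_div_two_pi_mul_pow n).sub ih).div_const (t ^ 2)).congr_fun
      fun k ↦ ?_
    rw [vTerm_eq_sub n t k]
    field_simp
    ring

theorem expansion_of_t_div_exp_sub_one (n : ℕ) (t : ℝ) (ht : 0 < t) :
    t / (Real.exp t - 1) =
      1 - t / 2 + ∑ k ∈ Finset.Icc 1 n, (bernoulli (2 * k) : ℝ) / ((2 * k).factorial : ℝ) * t ^ (2 * k)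
        + (-1 : ℝ) ^ n * t ^ (2 * n + 2) * V n t := by
  have hV : V n t = (-1) ^ n * bernoulliSeriesRemainder n t / t ^ (2 * n + 2) :=
    (hasSum_vTerm ht.ne' n).tsum_eq
  have hsign : ((-1 : ℝ) ^ n) ^ 2 = 1 := by rw [← pow_mul, mul_comm, pow_mul]; norm_num
  have hR : (-1) ^ n * t ^ (2 * n + 2) * V n t = bernoulliSeriesRemainder n t := by
    rw [hV]
    field_simp
    linear_combination bernoulliSeriesRemainder n t * hsign
  rw [hR, bernoulliSeriesRemainder]
  ring
end

section
/- For all integers k ≥ 0 and n ≥ k+1, the function x ↦ x^k ∫₀^∞ e^{−xt} t^{2n−1} V_n(t) dt is completely monotonic on (0,∞). (The function P_n(x) = (−1)^n ∫₀^∞ e^{−xt} t^{2n−1} V_n(t) dt is the remainder in the asymptotic expansion of the logarithm of the Barnes G-function, so (−1)^n P_n is completely monotonic of order k for n ≥ k+1.) -/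
open Real

/-!
Write `n = q + 1` and `c_i = 4π²(i+1)²`, so that `t^(2n-1) V_n(t) = ∑ᵢ 2 c_i^(-n) g_{c_i}(t)` with
`g_c(t) = t^(2q+1) / (t² + c) = t G(t²)` and `G(s) = s^q / (s + c)`.
For `j ≤ q` the derivative `G^(j)` is nonnegative on `[0, ∞)`: `G^(q) = q! c^q / (s + c)^(q+1)`,
and the lower ones follow by induction on `q` from `(s H)^(j) = s H^(j) + j H^(j-1)`.
Differentiating `t ↦ t G(t²)` only produces nonnegative combinations of the `G^(j)(t²)`, so for
`k ≤ q` the derivatives `g_c^(m)`, `m ≤ k`, are nonnegative on `[0, ∞)`, vanish at `0` for `m < k`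
and grow polynomially, uniformly in `c ≥ 1`. Integrating by parts `k` times,
`x^k ∫ e^(-xt) g_c(t) dt = ∫ e^(-xt) g_c^(k)(t) dt`, so `x^k` times the given integral is the
Laplace transform of the nonnegative function `∑ᵢ 2 c_i^(-n) g_{c_i}^(k)`, and the Laplace transform
of a nonnegative function is completely monotonic: differentiate under the integral sign.
-/

open MeasureTheory Set Filter Topology
open scoped Nat

noncomputable def laplace (g : ℝ → ℝ) (x : ℝ) : ℝ :=
  ∫ t in Ioi 0, exp (-x * t) * g t

def HasPolyGrowth (g : ℝ → ℝ) : Prop :=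
  ∃ C : ℝ, ∃ p : ℕ, ∀ t, 0 ≤ t → |g t| ≤ C * (1 + t) ^ p

lemma one_add_pow_mul_exp_neg_le {x t : ℝ} (hx : 0 < x) (ht : 0 ≤ t) (p : ℕ) :
    (1 + t) ^ p * exp (-x * t) ≤ p ! * (2 / x) ^ p * exp (x / 2) * exp (-(x / 2) * t) := by
  have h := pow_div_factorial_le_exp (x := x / 2 * (1 + t)) (by positivity) p
  rw [div_le_iff₀ (by positivity)] at h
  calc (1 + t) ^ p * exp (-x * t)
      = (2 / x) ^ p * (x / 2 * (1 + t)) ^ p * exp (-x * t) := by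
        rw [mul_pow, ← mul_assoc, ← mul_pow, div_mul_div_cancel₀ (by positivity),
          div_self (by positivity), one_pow, one_mul]
    _ ≤ (2 / x) ^ p * (exp (x / 2 * (1 + t)) * p !) * exp (-x * t) := by gcongr
    _ = p ! * (2 / x) ^ p * exp (x / 2) * exp (-(x / 2) * t) := by
        rw [show x / 2 * (1 + t) = x / 2 + -(x / 2) * t + x * t by ring, exp_add, exp_add,
          show -x * t = -(x * t) by ring, exp_neg]
        field_simp

lemma integrableOn_one_add_pow_mul_exp_neg {x : ℝ} (hx : 0 < x) (p : ℕ) :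
    IntegrableOn (fun t => (1 + t) ^ p * exp (-x * t)) (Ioi 0) := by
  refine ((exp_neg_integrableOn_Ioi 0 (half_pos hx)).const_mul
    (p ! * (2 / x) ^ p * exp (x / 2))).mono' (by fun_prop) ?_
  filter_upwards [ae_restrict_mem measurableSet_Ioi] with t ht
  have ht : (0 : ℝ) ≤ t := le_of_lt ht
  rw [norm_of_nonneg (by positivity)]
  exact one_add_pow_mul_exp_neg_le hx ht p

lemma laplace_const_mul (a : ℝ) (g : ℝ → ℝ) (x : ℝ) :
    laplace (fun t => a * g t) x = a * laplace g x := by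
  rw [laplace, laplace, ← integral_const_mul]
  congr 1
  funext t
  ring

namespace HasPolyGrowth

variable {g : ℝ → ℝ}

lemma neg_pow_mul (hg : HasPolyGrowth g) (m : ℕ) : HasPolyGrowth fun t => (-t) ^ m * g t := by
  obtain ⟨C, p, hC⟩ := hg
  refine ⟨C, p + m, fun t ht => ?_⟩
  rw [abs_mul, abs_pow, abs_neg, abs_of_nonneg ht]
  calc t ^ m * |g t| ≤ (1 + t) ^ m * (C * (1 + t) ^ p) :=
        mul_le_mul (pow_le_pow_left₀ ht (by linarith) m) (hC t ht) (abs_nonneg _) (by positivity)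
    _ = C * (1 + t) ^ (p + m) := by ring

lemma integrableOn_exp_mul (hg : HasPolyGrowth g)
    (hm : AEStronglyMeasurable g (volume.restrict (Ioi 0))) {x : ℝ} (hx : 0 < x) :
    IntegrableOn (fun t => exp (-x * t) * g t) (Ioi 0) := by
  obtain ⟨C, p, hC⟩ := hg
  refine ((integrableOn_one_add_pow_mul_exp_neg hx p).const_mul C).mono'
    ((by fun_prop : Continuous fun t => exp (-x * t)).aestronglyMeasurable.mul hm) ?_
  filter_upwards [ae_restrict_mem measurableSet_Ioi] with t ht
  rw [norm_mul, norm_of_nonneg (exp_pos _).le, norm_eq_abs]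
  calc exp (-x * t) * |g t| ≤ exp (-x * t) * (C * (1 + t) ^ p) := by
        gcongr; exact hC t (le_of_lt ht)
    _ = C * ((1 + t) ^ p * exp (-x * t)) := by ring

lemma tendsto_exp_mul (hg : HasPolyGrowth g) {x : ℝ} (hx : 0 < x) :
    Tendsto (fun t => exp (-x * t) * g t) atTop (𝓝 0) := by
  obtain ⟨C, p, hC⟩ := hg
  set K := C * (p ! * (2 / x) ^ p * exp (x / 2))
  have hdecay : Tendsto (fun t => K * exp (-(x / 2) * t)) atTop (𝓝 0) := by
    simpa using (tendsto_exp_atBot.comp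
      (tendsto_id.const_mul_atTop_of_neg (neg_lt_zero.2 (half_pos hx)))).const_mul K
  refine squeeze_zero_norm' ?_ hdecay
  filter_upwards [eventually_ge_atTop 0] with t ht
  rw [norm_mul, norm_of_nonneg (exp_pos _).le, norm_eq_abs]
  have hC0 : 0 ≤ C := nonneg_of_mul_nonneg_left ((abs_nonneg _).trans (hC t ht)) (by positivity)
  calc exp (-x * t) * |g t| ≤ exp (-x * t) * (C * (1 + t) ^ p) := by gcongr; exact hC t ht
    _ = C * ((1 + t) ^ p * exp (-x * t)) := by ring
    _ ≤ C * (p ! * (2 / x) ^ p * exp (x / 2) * exp (-(x / 2) * t)) :=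
        mul_le_mul_of_nonneg_left (one_add_pow_mul_exp_neg_le hx ht p) hC0
    _ = K * exp (-(x / 2) * t) := by ring

end HasPolyGrowth

section Laplace

variable {g : ℝ → ℝ}

lemma aestronglyMeasurable_neg_pow_mul (hm : AEStronglyMeasurable g (volume.restrict (Ioi 0)))
    (m : ℕ) : AEStronglyMeasurable (fun t => (-t) ^ m * g t) (volume.restrict (Ioi 0)) :=
  (by fun_prop : Continuous fun t : ℝ => (-t) ^ m).aestronglyMeasurable.mul hm

lemma hasDerivAt_laplace (hm : AEStronglyMeasurable g (volume.restrict (Ioi 0)))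
    (hg : HasPolyGrowth g) {x : ℝ} (hx : 0 < x) :
    HasDerivAt (laplace g) (laplace (fun t => -t * g t) x) x := by
  have hI := hg.integrableOn_exp_mul hm hx
  obtain ⟨C, p, hC⟩ := hg
  have hball : ∀ z ∈ Metric.ball x (x / 2), x / 2 < z := fun z hz => by
    have := abs_lt.mp (Real.dist_eq z x ▸ Metric.mem_ball.mp hz); linarith
  have hexp (z : ℝ) : AEStronglyMeasurable (fun t => exp (-z * t)) (volume.restrict (Ioi 0)) :=
    (by fun_prop : Continuous fun t => exp (-z * t)).aestronglyMeasurable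
  refine (hasDerivAt_integral_of_dominated_loc_of_deriv_le
    (F := fun z t => exp (-z * t) * g t) (F' := fun z t => exp (-z * t) * (-t * g t))
    (bound := fun t => C * ((1 + t) ^ (p + 1) * exp (-(x / 2) * t)))
    (Metric.ball_mem_nhds x (half_pos hx)) (Eventually.of_forall fun z => (hexp z).mul hm) hI
    ((hexp x).mul (by simpa using aestronglyMeasurable_neg_pow_mul hm 1)) ?_
    ((integrableOn_one_add_pow_mul_exp_neg (half_pos hx) (p + 1)).const_mul C) ?_).2
  · filter_upwards [ae_restrict_mem measurableSet_Ioi] with t ht z hz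
    have ht : 0 ≤ t := le_of_lt ht
    rw [norm_mul, norm_mul, norm_neg, norm_of_nonneg (exp_pos _).le, norm_of_nonneg ht,
      norm_eq_abs]
    calc exp (-z * t) * (t * |g t|)
        ≤ exp (-(x / 2) * t) * ((1 + t) * (C * (1 + t) ^ p)) := by
          gcongr
          · nlinarith [hball z hz]
          · linarith
          · exact hC t ht
      _ = C * ((1 + t) ^ (p + 1) * exp (-(x / 2) * t)) := by ring
  · refine Eventually.of_forall fun t z _ => ?_
    exact (((hasDerivAt_neg z).mul_const t).exp.mul_const (g t)).congr_deriv (by ring)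

lemma iteratedDeriv_laplace (hm : AEStronglyMeasurable g (volume.restrict (Ioi 0)))
    (hg : HasPolyGrowth g) (m : ℕ) {x : ℝ} (hx : 0 < x) :
    iteratedDeriv m (laplace g) x = laplace (fun t => (-t) ^ m * g t) x := by
  induction m generalizing x with
  | zero => simp
  | succ m ih =>
    have hev : iteratedDeriv m (laplace g) =ᶠ[𝓝 x] laplace (fun t => (-t) ^ m * g t) :=
      eventually_of_mem (Ioi_mem_nhds hx) fun y hy => ih hy
    rw [iteratedDeriv_succ, hev.deriv_eq,
      (hasDerivAt_laplace (aestronglyMeasurable_neg_pow_mul hm m) (hg.neg_pow_mul m) hx).deriv]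
    congr 1
    funext t
    ring

lemma completelyMonotonicOn_laplace (hm : AEStronglyMeasurable g (volume.restrict (Ioi 0)))
    (hg : HasPolyGrowth g) (hg0 : ∀ t, 0 < t → 0 ≤ g t) : CompletelyMonotonicOn (laplace g) := by
  refine ⟨fun m x hx => ?_, fun m x hx => ?_⟩
  · have hev : iteratedDeriv m (laplace g) =ᶠ[𝓝 x] laplace (fun t => (-t) ^ m * g t) :=
      eventually_of_mem (Ioi_mem_nhds hx) fun y hy => iteratedDeriv_laplace hm hg m hy
    rw [hev.differentiableAt_iff]
    exact (hasDerivAt_laplace (aestronglyMeasurable_neg_pow_mul hm m) (hg.neg_pow_mul m)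
      hx).differentiableAt
  · rw [iteratedDeriv_laplace hm hg m hx, laplace, ← integral_const_mul]
    refine setIntegral_nonneg measurableSet_Ioi fun t ht => ?_
    have hsign : (-1 : ℝ) ^ m * (-t) ^ m = t ^ m := by rw [← mul_pow]; simp
    rw [show (-1) ^ m * (exp (-x * t) * ((-t) ^ m * g t))
      = exp (-x * t) * (((-1) ^ m * (-t) ^ m) * g t) by ring, hsign]
    have := hg0 t ht
    have : (0 : ℝ) ≤ t := le_of_lt ht
    positivity

end Laplace

lemma CompletelyMonotonicOn.congr {f g : ℝ → ℝ} (hg : CompletelyMonotonicOn g)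
    (hfg : ∀ x, 0 < x → f x = g x) : CompletelyMonotonicOn f := by
  have hev : ∀ m x, 0 < x → iteratedDeriv m f =ᶠ[𝓝 x] iteratedDeriv m g := fun m x hx =>
    EventuallyEq.iteratedDeriv (eventually_of_mem (Ioi_mem_nhds hx) hfg) m
  exact ⟨fun m x hx => (hev m x hx).differentiableAt_iff.2 (hg.1 m x hx),
    fun m x hx => (hev m x hx).eq_of_nhds ▸ hg.2 m x hx⟩

lemma laplace_eq_mul_laplace_of_hasDerivAt {f f' : ℝ → ℝ} (hf : ∀ t, HasDerivAt f (f' t) t)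
    (hf' : Continuous f') (hf0 : f 0 = 0) (hfp : HasPolyGrowth f) (hf'p : HasPolyGrowth f')
    {x : ℝ} (hx : 0 < x) : laplace f' x = x * laplace f x := by
  have hcont : Continuous f := continuous_iff_continuousAt.2 fun t => (hf t).continuousAt
  have hI := hfp.integrableOn_exp_mul hcont.aestronglyMeasurable hx
  have hI' := hf'p.integrableOn_exp_mul hf'.aestronglyMeasurable hx
  have hderiv : ∀ t ∈ Ici (0 : ℝ), HasDerivAt (fun t => exp (-x * t) * f t)
      (exp (-x * t) * f' t - x * (exp (-x * t) * f t)) t := fun t _ =>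
    (((hasDerivAt_id t).const_mul (-x)).exp.mul (hf t)).congr_deriv (by simp only [id]; ring)
  have key := integral_Ioi_of_hasDerivAt_of_tendsto' hderiv (hI'.sub (hI.const_mul x))
    (hfp.tendsto_exp_mul hx)
  rw [integral_sub hI' (hI.const_mul x), integral_const_mul] at key
  simp only [hf0, mul_zero, sub_zero] at key
  exact sub_eq_zero.1 key

lemma laplace_eq_pow_mul_laplace {g : ℕ → ℝ → ℝ} {k : ℕ}
    (hg : ∀ m t, HasDerivAt (g m) (g (m + 1) t) t) (hg0 : ∀ m < k, g m 0 = 0)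
    (hgp : ∀ m ≤ k, HasPolyGrowth (g m)) {x : ℝ} (hx : 0 < x) :
    laplace (g k) x = x ^ k * laplace (g 0) x := by
  induction k with
  | zero => simp
  | succ k ih =>
    rw [laplace_eq_mul_laplace_of_hasDerivAt (hg k)
      (continuous_iff_continuousAt.2 fun t => (hg (k + 1) t).continuousAt) (hg0 k (by omega))
      (hgp k (by omega)) (hgp (k + 1) le_rfl) hx,
      ih (fun m hm => hg0 m (by omega)) (fun m hm => hgp m (by omega)), pow_succ]
    ring

section Series

variable {f : ℕ → ℝ → ℝ} {b : ℕ → ℝ} {p : ℕ}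

lemma hasPolyGrowth_tsum (hb : Summable b) (hfb : ∀ i t, 0 ≤ t → |f i t| ≤ b i * (1 + t) ^ p) :
    HasPolyGrowth fun t => ∑' i, f i t :=
  ⟨∑' i, b i, p, fun t ht => (norm_eq_abs (∑' i, f i t)).symm.trans_le <|
    tsum_of_norm_bounded (hb.hasSum.mul_right _) fun i => hfb i t ht⟩

lemma aestronglyMeasurable_tsum (hf : ∀ i, Continuous (f i)) (hb : Summable b)
    (hfb : ∀ i t, 0 ≤ t → |f i t| ≤ b i * (1 + t) ^ p) :
    AEStronglyMeasurable (fun t => ∑' i, f i t) (volume.restrict (Ioi 0)) := by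
  refine aestronglyMeasurable_of_tendsto_ae atTop (f := fun n t => ∑ i ∈ Finset.range n, f i t)
    (fun n => (continuous_finsetSum _ fun i _ => hf i).aestronglyMeasurable) ?_
  filter_upwards [ae_restrict_mem measurableSet_Ioi] with t ht
  exact ((hb.mul_right _).of_norm_bounded fun i => hfb i t ht.le).hasSum.tendsto_sum_nat

lemma laplace_tsum (hf : ∀ i, Continuous (f i)) (hb : Summable b)
    (hfb : ∀ i t, 0 ≤ t → |f i t| ≤ b i * (1 + t) ^ p) {x : ℝ} (hx : 0 < x) :
    laplace (fun t => ∑' i, f i t) x = ∑' i, laplace (f i) x := by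
  have hint : ∀ i, IntegrableOn (fun t => exp (-x * t) * f i t) (Ioi 0) := fun i =>
    HasPolyGrowth.integrableOn_exp_mul ⟨b i, p, hfb i⟩ (hf i).aestronglyMeasurable hx
  have hK := integrableOn_one_add_pow_mul_exp_neg hx p
  have hle : ∀ i, ∫ t in Ioi 0, ‖exp (-x * t) * f i t‖
      ≤ b i * ∫ t in Ioi 0, (1 + t) ^ p * exp (-x * t) := fun i => by
    rw [← integral_const_mul]
    refine setIntegral_mono_on (hint i).norm (hK.const_mul _) measurableSet_Ioi fun t ht => ?_
    rw [norm_mul, norm_of_nonneg (exp_pos _).le, norm_eq_abs]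
    calc exp (-x * t) * |f i t| ≤ exp (-x * t) * (b i * (1 + t) ^ p) := by
          gcongr; exact hfb i t (le_of_lt ht)
      _ = b i * ((1 + t) ^ p * exp (-x * t)) := by ring
  have hsum : Summable fun i => ∫ t in Ioi 0, ‖exp (-x * t) * f i t‖ :=
    (hb.mul_right _).of_nonneg_of_le (fun i => integral_nonneg fun t => norm_nonneg _) hle
  simp only [laplace, ← tsum_mul_left]
  exact (integral_tsum_of_summable_integral_norm hint hsum).symm

end Series

/-- `powDivDeriv c q j` is the `j`-th derivative of `s ↦ s ^ q / (s + c)`; the recursion in `q` is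
the Leibniz rule for `s * (s ^ q / (s + c))`. -/
noncomputable def powDivDeriv (c : ℝ) : ℕ → ℕ → ℝ → ℝ
  | 0, j, s => (-1) ^ j * j ! / (s + c) ^ (j + 1)
  | q + 1, 0, s => s * powDivDeriv c q 0 s
  | q + 1, j + 1, s => s * powDivDeriv c q (j + 1) s + ((j : ℝ) + 1) * powDivDeriv c q j s

namespace powDivDeriv

variable {c s : ℝ}

lemma zero_right (c : ℝ) (q : ℕ) (s : ℝ) : powDivDeriv c q 0 s = s ^ q / (s + c) := by
  induction q with
  | zero => simp [powDivDeriv]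
  | succ q ih => rw [powDivDeriv, ih, pow_succ]; ring

lemma hasDerivAt (hs : s + c ≠ 0) (q j : ℕ) :
    HasDerivAt (powDivDeriv c q j) (powDivDeriv c q (j + 1) s) s := by
  induction q generalizing j with
  | zero =>
    have h : HasDerivAt (fun s => ((-1) ^ j * j ! : ℝ) / (s + c) ^ (j + 1)) _ s :=
      (hasDerivAt_const s _).div (((hasDerivAt_id' s).add_const c).fun_pow (j + 1))
        (pow_ne_zero _ hs)
    refine h.congr_deriv ?_
    simp only [powDivDeriv, Nat.factorial_succ, Nat.cast_mul]
    field_simp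
    push_cast
    ring
  | succ q ih =>
    cases j with
    | zero =>
      exact ((hasDerivAt_id s).mul (ih 0)).congr_deriv
        (by simp only [powDivDeriv, id]; push_cast; ring)
    | succ j =>
      exact (((hasDerivAt_id s).mul (ih (j + 1))).add
        ((ih j).const_mul ((j : ℝ) + 1))).congr_deriv
        (by simp only [powDivDeriv, id]; push_cast; ring)

/-- For `j ≥ q` only the principal part `(-c) ^ q / (s + c)` of `s ^ q / (s + c)` contributes. -/
lemma of_le (hs : s + c ≠ 0) {q j : ℕ} (hqj : q ≤ j) :
    powDivDeriv c q j s = (-c) ^ q * ((-1) ^ j * j ! / (s + c) ^ (j + 1)) := by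
  induction q generalizing j with
  | zero => simp [powDivDeriv]
  | succ q ih =>
    obtain ⟨j, rfl⟩ : ∃ i, j = i + 1 := ⟨j - 1, by omega⟩
    rw [powDivDeriv, ih (by omega), ih (by omega), Nat.factorial_succ]
    field_simp
    push_cast
    ring

lemma nonneg (hc : 0 < c) (hs : 0 ≤ s) {q j : ℕ} (hjq : j ≤ q) :
    0 ≤ powDivDeriv c q j s := by
  induction q generalizing j with
  | zero =>
    obtain rfl : j = 0 := by omega
    simp only [powDivDeriv]
    positivity
  | succ q ih =>
    rcases hjq.lt_or_eq with hjq | rfl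
    · cases j with
      | zero => exact mul_nonneg hs (ih (Nat.zero_le q))
      | succ j =>
        exact add_nonneg (mul_nonneg hs (ih (by omega)))
          (mul_nonneg (by positivity) (ih (by omega)))
    · have hsign : (-c) ^ (q + 1) * (-1) ^ (q + 1) = c ^ (q + 1) := by
        rw [← mul_pow, neg_mul_neg, mul_one]
      rw [of_le (by positivity) le_rfl, ← mul_div_assoc, ← mul_assoc, hsign]
      positivity

lemma apply_zero {q j : ℕ} (hjq : j < q) : powDivDeriv c q j 0 = 0 := by
  induction q generalizing j with
  | zero => omega
  | succ q ih =>
    cases j with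
    | zero => simp [powDivDeriv]
    | succ j => simp [powDivDeriv, ih (by omega : j < q)]

lemma abs_le (hc : 1 ≤ c) (hs : 0 ≤ s) (q j : ℕ) :
    |powDivDeriv c q j s| ≤ j ! * ((j : ℝ) + 1) ^ q * (1 + s) ^ q := by
  induction q generalizing j with
  | zero =>
    have : 1 ≤ (s + c) ^ (j + 1) := one_le_pow₀ (by linarith)
    rw [powDivDeriv, abs_div, abs_mul, abs_pow, abs_neg, abs_one, one_pow, one_mul,
      abs_of_nonneg (by positivity), abs_of_nonneg (by positivity), pow_zero, pow_zero, mul_one,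
      mul_one]
    exact div_le_self (by positivity) this
  | succ q ih =>
    cases j with
    | zero =>
      have h := ih 0
      simp only [Nat.factorial_zero, Nat.cast_one, Nat.cast_zero, zero_add, one_pow,
        one_mul] at h ⊢
      rw [powDivDeriv, abs_mul, abs_of_nonneg hs, pow_succ']
      gcongr
      linarith
    | succ j =>
      have h1 := ih (j + 1)
      have h2 : ((j : ℝ) + 1) * |powDivDeriv c q j s|
          ≤ (j + 1)! * ((j : ℝ) + 1 + 1) ^ q * (1 + s) ^ q := by
        rw [Nat.factorial_succ, Nat.cast_mul, Nat.cast_succ, mul_assoc, mul_assoc]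
        gcongr
        refine (ih j).trans ?_
        rw [mul_assoc]
        gcongr
        linarith
      push_cast at h1 ⊢
      rw [powDivDeriv]
      calc |s * powDivDeriv c q (j + 1) s + ((j : ℝ) + 1) * powDivDeriv c q j s|
          ≤ s * |powDivDeriv c q (j + 1) s| + ((j : ℝ) + 1) * |powDivDeriv c q j s| := by
            refine (abs_add_le _ _).trans_eq ?_
            rw [abs_mul, abs_mul, abs_of_nonneg hs, abs_of_nonneg (by positivity : (0 : ℝ) ≤ j + 1)]
        _ ≤ (s + 1) * ((j + 1)! * ((j : ℝ) + 1 + 1) ^ q * (1 + s) ^ q) := by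
            nlinarith [mul_le_mul_of_nonneg_left h1 hs]
        _ ≤ ((j : ℝ) + 1 + 1) * (1 + s) * ((j + 1)! * ((j : ℝ) + 1 + 1) ^ q * (1 + s) ^ q) := by
            gcongr
            nlinarith [(Nat.cast_nonneg j : (0 : ℝ) ≤ j)]
        _ = (j + 1)! * ((j : ℝ) + 1 + 1) ^ (q + 1) * (1 + s) ^ (q + 1) := by ring

end powDivDeriv

lemma abs_mul_add_mul_le {t u v w a b : ℝ} {k : ℕ} (ht : 0 ≤ t) (hw : 0 ≤ w)
    (hu : |u| ≤ a * (1 + t) ^ (k + 1)) (hv : |v| ≤ b * (1 + t) ^ k) :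
    |t * u + w * v| ≤ (a + w * b) * (1 + t) ^ (k + 2) := by
  have ha : 0 ≤ a := nonneg_of_mul_nonneg_left ((abs_nonneg _).trans hu) (by positivity)
  have hb : 0 ≤ b := nonneg_of_mul_nonneg_left ((abs_nonneg _).trans hv) (by positivity)
  have h1 : 1 ≤ (1 + t) ^ 2 := one_le_pow₀ (by linarith)
  calc |t * u + w * v| ≤ t * |u| + w * |v| := by
        refine (abs_add_le _ _).trans_eq ?_
        rw [abs_mul, abs_mul, abs_of_nonneg ht, abs_of_nonneg hw]
    _ ≤ (1 + t) * (a * (1 + t) ^ (k + 1)) + w * ((1 + t) ^ 2 * (b * (1 + t) ^ k)) := by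
        gcongr
        · linarith
        · exact hv.trans (le_mul_of_one_le_left ((abs_nonneg _).trans hv) h1)
    _ = (a + w * b) * (1 + t) ^ (k + 2) := by ring

lemma hasDerivAt_comp_sq {G G' : ℝ → ℝ} {t : ℝ} (hG : HasDerivAt G (G' (t ^ 2)) (t ^ 2)) :
    HasDerivAt (fun t => G (t ^ 2)) (2 * t * G' (t ^ 2)) t :=
  (HasDerivAt.comp (h := fun t : ℝ => t ^ 2) t hG (hasDerivAt_pow 2 t)).congr_deriv
    (by push_cast; ring)

/-- If `F j` is the `j`-th derivative of `F 0`, then `sqDeriv F m` is the `m`-th derivative of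
`t ↦ F 0 (t ^ 2)`, obtained by differentiating `(G ∘ sq)' = 2 t (G' ∘ sq)` with the Leibniz rule. -/
noncomputable def sqDeriv (F : ℕ → ℝ → ℝ) : ℕ → ℝ → ℝ
  | 0, t => F 0 (t ^ 2)
  | 1, t => 2 * t * F 1 (t ^ 2)
  | m + 2, t => 2 * t * sqDeriv (fun j => F (j + 1)) (m + 1) t
      + 2 * ((m : ℝ) + 1) * sqDeriv (fun j => F (j + 1)) m t

namespace sqDeriv

lemma hasDerivAt : ∀ {F : ℕ → ℝ → ℝ}, (∀ j s, 0 ≤ s → HasDerivAt (F j) (F (j + 1) s) s) →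
    ∀ m t, HasDerivAt (sqDeriv F m) (sqDeriv F (m + 1) t) t
  | F, hF, 0, t => hasDerivAt_comp_sq (hF 0 _ (sq_nonneg t))
  | F, hF, 1, t => by
    exact (((hasDerivAt_id t).const_mul 2).mul (hasDerivAt_comp_sq (hF 1 _ (sq_nonneg t))))
      |>.congr_deriv (by simp only [sqDeriv, id]; ring)
  | F, hF, m + 2, t => by
    have hF' : ∀ j s, 0 ≤ s → HasDerivAt (F (j + 1)) (F (j + 1 + 1) s) s := fun j => hF (j + 1)
    have h₁ := hasDerivAt hF' (m + 1) t
    have h₀ := hasDerivAt hF' m t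
    exact (((hasDerivAt_id t).const_mul 2).mul h₁).add (h₀.const_mul (2 * ((m : ℝ) + 1)))
      |>.congr_deriv (by simp only [sqDeriv, id]; push_cast; ring)

lemma nonneg : ∀ {F : ℕ → ℝ → ℝ} {m : ℕ}, (∀ j ≤ m, ∀ s, 0 ≤ s → 0 ≤ F j s) →
    ∀ {t : ℝ}, 0 ≤ t → 0 ≤ sqDeriv F m t
  | F, 0, hF, t, _ => hF 0 le_rfl _ (sq_nonneg t)
  | F, 1, hF, t, ht => by
    have := hF 1 le_rfl _ (sq_nonneg t)
    simp only [sqDeriv]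
    positivity
  | F, m + 2, hF, t, ht => by
    have h₁ := nonneg (F := fun j => F (j + 1)) (m := m + 1) (fun j _ => hF (j + 1) (by omega)) ht
    have h₀ := nonneg (F := fun j => F (j + 1)) (m := m) (fun j _ => hF (j + 1) (by omega)) ht
    simp only [sqDeriv]
    positivity

lemma apply_zero : ∀ {F : ℕ → ℝ → ℝ} {m : ℕ}, (∀ j ≤ m, F j 0 = 0) → sqDeriv F m 0 = 0
  | F, 0, hF => by simpa [sqDeriv] using hF 0 le_rfl
  | F, 1, _ => by simp [sqDeriv]
  | F, m + 2, hF => by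
    simp [sqDeriv, apply_zero (F := fun j => F (j + 1)) (m := m) fun j _ => hF (j + 1) (by omega)]

lemma abs_le (r : ℕ) : ∀ m : ℕ, ∃ A : ℝ, ∀ (F : ℕ → ℝ → ℝ) (B : ℝ),
    (∀ j ≤ m, ∀ s, 0 ≤ s → |F j s| ≤ B * (1 + s) ^ r) →
    ∀ t, 0 ≤ t → |sqDeriv F m t| ≤ A * B * (1 + t) ^ (2 * r + m)
  | 0 => ⟨1, fun F B hF t ht => by
    have hB : 0 ≤ B := by simpa using (abs_nonneg _).trans (hF 0 le_rfl 0 le_rfl)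
    calc |F 0 (t ^ 2)| ≤ B * (1 + t ^ 2) ^ r := hF 0 le_rfl _ (sq_nonneg t)
      _ ≤ B * ((1 + t) ^ 2) ^ r := by gcongr; nlinarith
      _ = 1 * B * (1 + t) ^ (2 * r + 0) := by rw [← pow_mul]; ring⟩
  | 1 => ⟨2, fun F B hF t ht => by
    have hB : 0 ≤ B := by simpa using (abs_nonneg _).trans (hF 0 (by omega) 0 le_rfl)
    calc |2 * t * F 1 (t ^ 2)| = 2 * t * |F 1 (t ^ 2)| := by
          rw [abs_mul, abs_of_nonneg (by positivity)]
      _ ≤ 2 * (1 + t) * (B * ((1 + t) ^ 2) ^ r) := by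
          gcongr
          · linarith
          · refine (hF 1 le_rfl _ (sq_nonneg t)).trans ?_
            gcongr
            nlinarith
      _ = 2 * B * (1 + t) ^ (2 * r + 1) := by rw [← pow_mul]; ring⟩
  | m + 2 => by
    obtain ⟨A₁, h₁⟩ := abs_le r (m + 1)
    obtain ⟨A₀, h₀⟩ := abs_le r m
    refine ⟨2 * (A₁ + ((m : ℝ) + 1) * A₀), fun F B hF t ht => ?_⟩
    have hF' : ∀ m' ≤ m + 1, ∀ j ≤ m', ∀ s, 0 ≤ s → |F (j + 1) s| ≤ B * (1 + s) ^ r :=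
      fun m' hm' j hj => hF (j + 1) (by omega)
    have h := abs_mul_add_mul_le (k := 2 * r + m) ht (by positivity : (0 : ℝ) ≤ (m : ℝ) + 1)
      (h₁ _ B (hF' _ le_rfl) t ht) (h₀ _ B (hF' m (by omega)) t ht)
    calc |sqDeriv F (m + 2) t|
        = 2 * |t * sqDeriv (fun j => F (j + 1)) (m + 1) t
            + ((m : ℝ) + 1) * sqDeriv (fun j => F (j + 1)) m t| := by
          rw [sqDeriv, ← abs_two, ← abs_mul]
          ring_nf
      _ ≤ 2 * ((A₁ * B + ((m : ℝ) + 1) * (A₀ * B)) * (1 + t) ^ (2 * r + m + 2)) := by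
          gcongr
      _ = _ := by ring

end sqDeriv

/-- The `m`-th derivative of `t ↦ t * F 0 (t ^ 2)`, in the setting of `sqDeriv`. -/
noncomputable def oddDeriv (F : ℕ → ℝ → ℝ) : ℕ → ℝ → ℝ
  | 0, t => t * sqDeriv F 0 t
  | m + 1, t => t * sqDeriv F (m + 1) t + ((m : ℝ) + 1) * sqDeriv F m t

namespace oddDeriv

variable {F : ℕ → ℝ → ℝ}

lemma hasDerivAt (hF : ∀ j s, 0 ≤ s → HasDerivAt (F j) (F (j + 1) s) s) (m : ℕ) (t : ℝ) :
    HasDerivAt (oddDeriv F m) (oddDeriv F (m + 1) t) t := by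
  have hsq := sqDeriv.hasDerivAt hF
  cases m with
  | zero =>
    exact ((hasDerivAt_id t).mul (hsq 0 t)).congr_deriv (by simp only [oddDeriv, id]; ring)
  | succ m =>
    exact (((hasDerivAt_id t).mul (hsq (m + 1) t)).add
      ((hsq m t).const_mul ((m : ℝ) + 1))).congr_deriv
      (by simp only [oddDeriv, id]; push_cast; ring)

lemma nonneg {m : ℕ} (hF : ∀ j ≤ m, ∀ s, 0 ≤ s → 0 ≤ F j s) {t : ℝ} (ht : 0 ≤ t) :
    0 ≤ oddDeriv F m t := by
  cases m with
  | zero => exact mul_nonneg ht (sqDeriv.nonneg hF ht)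
  | succ m =>
    have h₁ := sqDeriv.nonneg hF ht
    have h₀ := sqDeriv.nonneg (m := m) (fun j hj => hF j (by omega)) ht
    simp only [oddDeriv]
    positivity

lemma apply_zero {m : ℕ} (hF : ∀ j < m, F j 0 = 0) : oddDeriv F m 0 = 0 := by
  cases m with
  | zero => simp [oddDeriv]
  | succ m => simp [oddDeriv, sqDeriv.apply_zero (m := m) fun j hj => hF j (by omega)]

lemma abs_le (r m : ℕ) : ∃ A : ℝ, ∀ (F : ℕ → ℝ → ℝ) (B : ℝ),
    (∀ j ≤ m, ∀ s, 0 ≤ s → |F j s| ≤ B * (1 + s) ^ r) →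
    ∀ t, 0 ≤ t → |oddDeriv F m t| ≤ A * B * (1 + t) ^ (2 * r + m + 1) := by
  cases m with
  | zero =>
    obtain ⟨A, hA⟩ := sqDeriv.abs_le r 0
    refine ⟨A, fun F B hF t ht => ?_⟩
    have h := hA F B hF t ht
    have hAB : 0 ≤ A * B := nonneg_of_mul_nonneg_left ((abs_nonneg _).trans h) (by positivity)
    calc |oddDeriv F 0 t| = t * |sqDeriv F 0 t| := by rw [oddDeriv, abs_mul, abs_of_nonneg ht]
      _ ≤ (1 + t) * (A * B * (1 + t) ^ (2 * r + 0)) := by gcongr; linarith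
      _ = A * B * (1 + t) ^ (2 * r + 0 + 1) := by ring
  | succ m =>
    obtain ⟨A₁, h₁⟩ := sqDeriv.abs_le r (m + 1)
    obtain ⟨A₀, h₀⟩ := sqDeriv.abs_le r m
    refine ⟨A₁ + ((m : ℝ) + 1) * A₀, fun F B hF t ht => ?_⟩
    have h := abs_mul_add_mul_le (k := 2 * r + m) ht (by positivity : (0 : ℝ) ≤ (m : ℝ) + 1)
      (h₁ F B hF t ht) (h₀ F B (fun j hj => hF j (by omega)) t ht)
    rw [oddDeriv]
    convert h using 2 <;> ring

end oddDeriv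

section Kernel

variable {c : ℝ} {q : ℕ}

lemma oddDeriv_powDivDeriv_zero (c : ℝ) (q : ℕ) (t : ℝ) :
    oddDeriv (powDivDeriv c q) 0 t = t ^ (2 * q + 1) / (t ^ 2 + c) := by
  rw [oddDeriv, sqDeriv, powDivDeriv.zero_right, ← pow_mul, pow_succ]
  ring

lemma hasDerivAt_oddDeriv_powDivDeriv (hc : 0 < c) (m : ℕ) (t : ℝ) :
    HasDerivAt (oddDeriv (powDivDeriv c q) m) (oddDeriv (powDivDeriv c q) (m + 1) t) t :=
  oddDeriv.hasDerivAt (fun j s hs => powDivDeriv.hasDerivAt (by positivity) q j) m t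

lemma continuous_oddDeriv_powDivDeriv (hc : 0 < c) (m : ℕ) :
    Continuous (oddDeriv (powDivDeriv c q) m) :=
  continuous_iff_continuousAt.2 fun t => (hasDerivAt_oddDeriv_powDivDeriv hc m t).continuousAt

lemma oddDeriv_powDivDeriv_nonneg (hc : 0 < c) {m : ℕ} (hmq : m ≤ q) {t : ℝ} (ht : 0 ≤ t) :
    0 ≤ oddDeriv (powDivDeriv c q) m t :=
  oddDeriv.nonneg (fun j hj s hs => powDivDeriv.nonneg hc hs (by omega)) ht

lemma exists_abs_oddDeriv_powDivDeriv_le (q m : ℕ) : ∃ C : ℝ, ∃ p : ℕ,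
    ∀ c, 1 ≤ c → ∀ t, 0 ≤ t → |oddDeriv (powDivDeriv c q) m t| ≤ C * (1 + t) ^ p := by
  obtain ⟨A, hA⟩ := oddDeriv.abs_le q m
  refine ⟨A * (m ! * ((m : ℝ) + 1) ^ q), 2 * q + m + 1, fun c hc t ht => hA _ _ ?_ t ht⟩
  intro j hj s hs
  refine (powDivDeriv.abs_le hc hs q j).trans ?_
  gcongr

lemma laplace_oddDeriv_powDivDeriv (hc : 1 ≤ c) {k : ℕ} (hkq : k ≤ q) {x : ℝ} (hx : 0 < x) :
    laplace (oddDeriv (powDivDeriv c q) k) x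
      = x ^ k * laplace (oddDeriv (powDivDeriv c q) 0) x := by
  refine laplace_eq_pow_mul_laplace (hasDerivAt_oddDeriv_powDivDeriv (by linarith))
    (fun m hm => oddDeriv.apply_zero fun j hj => powDivDeriv.apply_zero (by omega))
    (fun m _ => ?_) hx
  obtain ⟨C, p, h⟩ := exists_abs_oddDeriv_powDivDeriv_le q m
  exact ⟨C, p, h c hc⟩

lemma exists_abs_mul_oddDeriv_powDivDeriv_le {a c : ℕ → ℝ} (ha : Summable a)
    (hc : ∀ i, 1 ≤ c i) (q m : ℕ) :
    ∃ b : ℕ → ℝ, ∃ p : ℕ, Summable b ∧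
      ∀ i t, 0 ≤ t → |a i * oddDeriv (powDivDeriv (c i) q) m t| ≤ b i * (1 + t) ^ p := by
  obtain ⟨C, p, h⟩ := exists_abs_oddDeriv_powDivDeriv_le q m
  refine ⟨fun i => |a i| * C, p, ha.abs.mul_right C, fun i t ht => ?_⟩
  rw [abs_mul, mul_assoc]
  exact mul_le_mul_of_nonneg_left (h (c i) (hc i) t ht) (abs_nonneg _)

end Kernel

noncomputable def barnesPole (i : ℕ) : ℝ := 4 * π ^ 2 * ((i : ℝ) + 1) ^ 2

lemma sq_le_barnesPole (i : ℕ) : ((i : ℝ) + 1) ^ 2 ≤ barnesPole i := by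
  have : 1 ≤ 4 * π ^ 2 := by nlinarith [pi_gt_three]
  exact le_mul_of_one_le_left (sq_nonneg _) this

lemma one_le_barnesPole (i : ℕ) : 1 ≤ barnesPole i :=
  (one_le_pow₀ (by linarith [(Nat.cast_nonneg i : (0 : ℝ) ≤ i)])).trans (sq_le_barnesPole i)

lemma summable_two_div_barnesPole_pow (q : ℕ) :
    Summable fun i => 2 / barnesPole i ^ (q + 1) := by
  have hsq : Summable fun i : ℕ => 2 / ((i : ℝ) + 1) ^ 2 := by
    simpa [div_eq_mul_inv] using
      ((summable_nat_add_iff 1).2 (Real.summable_one_div_nat_pow.2 one_lt_two)).mul_left 2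
  refine hsq.of_nonneg_of_le (fun i => by have := one_le_barnesPole i; positivity) fun i => ?_
  have h1 := one_le_barnesPole i
  gcongr
  exact (sq_le_barnesPole i).trans (le_self_pow₀ h1 (by omega))

lemma pow_mul_V_eq_tsum_s16 (q : ℕ) (t : ℝ) : t ^ (2 * (q + 1) - 1) * V (q + 1) t
    = ∑' i, 2 / barnesPole i ^ (q + 1) * oddDeriv (powDivDeriv (barnesPole i) q) 0 t := by
  rw [V, ← tsum_mul_left]
  refine tsum_congr fun i => ?_
  have := one_le_barnesPole i
  rw [oddDeriv_powDivDeriv_zero, show 2 * (q + 1) - 1 = 2 * q + 1 by omega,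
    show (2 * π * ((i : ℝ) + 1)) ^ (2 * (q + 1)) = barnesPole i ^ (q + 1) by
      rw [barnesPole, pow_mul]; ring]
  unfold barnesPole at this ⊢
  field_simp

theorem barnesG_remainder_completelyMonotonic (k n : ℕ) (hkn : k + 1 ≤ n) :
    CompletelyMonotonicOn (fun x : ℝ =>
      x ^ k * ∫ t in Set.Ioi (0 : ℝ), Real.exp (-x * t) * (t ^ (2 * n - 1) * V n t)) := by
  obtain ⟨q, rfl⟩ : ∃ q, n = q + 1 := ⟨n - 1, by omega⟩
  have ha := summable_two_div_barnesPole_pow q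
  have hpole : ∀ i, 0 < barnesPole i := fun i => one_pos.trans_le (one_le_barnesPole i)
  obtain ⟨b₀, p₀, hb₀, h₀⟩ := exists_abs_mul_oddDeriv_powDivDeriv_le ha one_le_barnesPole q 0
  obtain ⟨b, p, hb, h⟩ := exists_abs_mul_oddDeriv_powDivDeriv_le ha one_le_barnesPole q k
  have hcont : ∀ m i, Continuous fun t =>
      2 / barnesPole i ^ (q + 1) * oddDeriv (powDivDeriv (barnesPole i) q) m t := fun m i =>
    continuous_const.mul (continuous_oddDeriv_powDivDeriv (hpole i) m)
  refine (completelyMonotonicOn_laplace (aestronglyMeasurable_tsum (hcont k) hb h)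
    (hasPolyGrowth_tsum hb h) fun t ht => tsum_nonneg fun i => ?_).congr fun x hx => ?_
  · have := hpole i
    exact mul_nonneg (by positivity) (oddDeriv_powDivDeriv_nonneg (hpole i) (by omega) ht.le)
  · change x ^ k * laplace (fun t => t ^ (2 * (q + 1) - 1) * V (q + 1) t) x = _
    simp only [pow_mul_V_eq_tsum_s16]
    rw [laplace_tsum (hcont 0) hb₀ h₀ hx, laplace_tsum (hcont k) hb h hx, ← tsum_mul_left]
    refine tsum_congr fun i => ?_
    rw [laplace_const_mul, laplace_const_mul,
      laplace_oddDeriv_powDivDeriv (one_le_barnesPole i) (k := k) (by omega) hx]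
    ring
end
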